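/- arXiv:2308.12786 — 8 statements merged into one kernel-verified Lean document; each statement's English description precedes it below -/
import Mathlib

section
/- Let P ⊆ ℝ^d be a convex polytope of dimension d with vertex set V, and let c be a real number with d/(d+1) < c < 1. Then P equals the union over all vertices v ∈ V of the sets c·P − c·v + v (i.e., the homothetic copies of P with ratio c centered at each vertex cover P). -/
open Set

/-- Lemma (vertex-homothety covering): a full-dimensional convex polytope `P ⊆ ℝ^d`
is covered by the homothetic copies `c•P - c•v + v` centered at its extreme points,
for any `d/(d+1) < c < 1`. -/
theorem stmt_0 (d : ℕ) (S : Finset (Fin d → ℝ)) (P : Set (Fin d → ℝ))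
    (hP : P = convexHull ℝ (S : Set (Fin d → ℝ)))
    (hdim : affineSpan ℝ P = ⊤)
    (c : ℝ) (hc1 : (d : ℝ) / (d + 1) < c) (hc2 : c < 1) :
    P = ⋃ v ∈ Set.extremePoints ℝ P, (fun x => c • x + (1 - c) • v) '' P := by
  classical
  have hc0 : 0 < c := lt_of_le_of_lt (div_nonneg (Nat.cast_nonneg d) (by positivity)) hc1
  have hPconv : Convex ℝ P := hP ▸ convex_convexHull ℝ _
  have hPcomp : IsCompact P := hP ▸ (S.finite_toSet.isCompact_convexHull ℝ)
  have hES : P.extremePoints ℝ ⊆ (S : Set (Fin d → ℝ)) := by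
    rw [hP]; exact extremePoints_convexHull_subset
  have hEfin : (P.extremePoints ℝ).Finite := S.finite_toSet.subset hES
  have hKM : convexHull ℝ (P.extremePoints ℝ) = P := by
    have h1 : closure (convexHull ℝ (P.extremePoints ℝ)) = P :=
      closure_convexHull_extremePoints hPcomp hPconv
    have h2 : IsClosed (convexHull ℝ (P.extremePoints ℝ)) :=
      (hEfin.isCompact_convexHull ℝ).isClosed
    calc convexHull ℝ (P.extremePoints ℝ)
        = closure (convexHull ℝ (P.extremePoints ℝ)) := h2.closure_eq.symm
      _ = P := h1
  have hEP : P.extremePoints ℝ ⊆ P := extremePoints_subset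
  apply Set.Subset.antisymm
  · intro x hx
    obtain ⟨ι, hι, z, w, hrange, hai, hwpos, hwsum, hzsum⟩ :=
      eq_pos_convex_span_of_mem_convexHull (hKM ▸ hx)
    have hcard : Fintype.card ι ≤ d + 1 := by
      have h1 := hai.card_le_finrank_succ
      have h2 : Module.finrank ℝ ↥(vectorSpan ℝ (Set.range z)) ≤ d := by
        have := Submodule.finrank_le (vectorSpan ℝ (Set.range z))
        simpa [Module.finrank_fin_fun] using this
      omega
    have hne : Nonempty ι := by
      by_contra h
      rw [not_nonempty_iff] at h
      simp at hwsum
    obtain ⟨i, -, hi⟩ :=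
      Finset.exists_max_image Finset.univ w ⟨Classical.arbitrary ι, Finset.mem_univ _⟩
    have hwi : 1 - c < w i := by
      have hcardpos : (0 : ℝ) < Fintype.card ι := by exact_mod_cast Fintype.card_pos
      have h1 : (1 : ℝ) ≤ Fintype.card ι * w i := by
        calc (1:ℝ) = ∑ j, w j := hwsum.symm
        _ ≤ ∑ _j : ι, w i := Finset.sum_le_sum fun j _ => hi j (Finset.mem_univ j)
        _ = Fintype.card ι * w i := by simp [Finset.sum_const, nsmul_eq_mul]
      have h2 : 1 / ((d : ℝ) + 1) ≤ w i := by
        have h3 : (1:ℝ) / Fintype.card ι ≤ w i := by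
          rw [div_le_iff₀ hcardpos]; linarith
        refine le_trans ?_ h3
        apply one_div_le_one_div_of_le hcardpos
        exact_mod_cast hcard
      have h4 : 1 - c < 1 / ((d:ℝ) + 1) := by
        have h5 := (div_lt_iff₀ (show (0:ℝ) < (d:ℝ) + 1 by positivity)).mp hc1
        rw [lt_div_iff₀ (by positivity)]
        nlinarith
      linarith
    have hziE : z i ∈ P.extremePoints ℝ := hrange (Set.mem_range_self i)
    set μ : ι → ℝ := fun j => c⁻¹ * (w j - if j = i then (1 - c) else 0) with hμ
    have hμnonneg : ∀ j, 0 ≤ μ j := by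
      intro j
      apply mul_nonneg (by positivity)
      by_cases h : j = i <;> simp [h]
      · linarith
      · exact (hwpos j).le
    have hif : ∑ j : ι, (if j = i then (1-c) else (0:ℝ)) = 1 - c := by
      simp [Finset.sum_ite_eq']
    have hμsum : ∑ j, μ j = 1 := by
      simp only [hμ, mul_sub, Finset.sum_sub_distrib, ← Finset.mul_sum, hwsum, hif]
      field_simp
      ring
    set y : Fin d → ℝ := ∑ j, μ j • z j with hy
    have hyP : y ∈ P := by
      rw [← hKM]
      exact (convex_convexHull ℝ _).sum_mem (fun j _ => hμnonneg j) hμsum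
        (fun j _ => subset_convexHull ℝ _ (hrange (Set.mem_range_self j)))
    have hxy : c • y + (1 - c) • z i = x := by
      rw [hy, Finset.smul_sum]
      have hterm : ∀ j, c • (μ j • z j)
          = w j • z j - (if j = i then (1-c) else 0) • z j := by
        intro j
        rw [hμ]
        have hh : c • (c⁻¹ * (w j - if j = i then (1-c) else 0)) • z j
            = (w j - if j = i then (1-c) else 0) • z j := by
          rw [smul_smul, ← mul_assoc, mul_inv_cancel₀ hc0.ne', one_mul]
        rw [hh, sub_smul]
      have hifv : ∑ j : ι, (if j = i then (1-c) else (0:ℝ)) • z j = (1-c) • z i := by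
        simp [ite_smul, Finset.sum_ite_eq']
      simp only [hterm, Finset.sum_sub_distrib, hifv, hzsum]
      abel
    rw [Set.mem_iUnion₂]
    exact ⟨z i, hziE, y, hyP, hxy⟩
  · rw [Set.iUnion₂_subset_iff]
    rintro v hv _ ⟨y, hy, rfl⟩
    exact hPconv hy (hEP hv) hc0.le (by linarith) (by ring)
end

section
/- Let P ⊆ ℝ^n be a pointed (line-free) convex polyhedron with recession cone C, and let ∂_f P denote the union of the bounded faces of P. Then P = ∂_f P + C, i.e., every point of P can be written as a point of some bounded face of P plus a vector in C. -/
/-!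
Let `x ∈ P` and let `F` be the face cut out by the constraints active at `x`; it is exposed by the
sum of the active functionals. If `F` is bounded we are done. Otherwise, by compactness of the unit
sphere, `F` has a nonzero recession direction `c`: all constraints are nonincreasing along `c` and
the active ones are constant. As `P` contains no line, some constraint strictly decreases along `c`,
so walking back from `x` along `-c` until a new constraint becomes active yields `x' ∈ P` with
`x = x' + t • c`, `t ≥ 0`, and a strictly larger active set. Induction on the active set finishes.
-/

open Set Pointwise Bornology

namespace Polyhedron

section Algebraic

variable {ι E : Type*} [AddCommGroup E] [Module ℝ E] (f : ι → E →ₗ[ℝ] ℝ) (b : ι → ℝ)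

def polyhedron : Set E := {x | ∀ i, f i x ≤ b i}

def face (S : Finset ι) : Set E := {z ∈ polyhedron f b | ∀ i ∈ S, f i z = b i}

noncomputable def activeSet [Fintype ι] (x : E) : Finset ι := {i | f i x = b i}

variable {f b}

lemma add_smul_mem_polyhedron {x c : E} {t : ℝ} (hx : x ∈ polyhedron f b)
    (hc : c ∈ polyhedron f 0) (ht : 0 ≤ t) : x + t • c ∈ polyhedron f b := fun i => by
  have := mul_nonpos_of_nonneg_of_nonpos ht (hc i)
  simp only [map_add, map_smul, smul_eq_mul]
  linarith [hx i]

variable [Fintype ι]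

lemma mem_activeSet {x : E} {i : ι} : i ∈ activeSet f b x ↔ f i x = b i := by
  simp [activeSet]

lemma mem_face_activeSet {x : E} (hx : x ∈ polyhedron f b) : x ∈ face f b (activeSet f b x) :=
  ⟨hx, fun _ hi => mem_activeSet.1 hi⟩

lemma exists_activeSet_lt_sub_smul {x c : E} (hx : x ∈ polyhedron f b) (hc : c ∈ polyhedron f 0)
    (hcx : ∀ i ∈ activeSet f b x, f i c = 0) {i₀ : ι} (hi₀ : f i₀ c < 0) :
    ∃ t : ℝ, 0 ≤ t ∧ x - t • c ∈ polyhedron f b ∧ activeSet f b x < activeSet f b (x - t • c) := by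
  have hJ : ({i | f i c < 0} : Finset ι).Nonempty := ⟨i₀, by simpa using hi₀⟩
  -- `t` is the largest step back along `c` that stays in the polyhedron; at `j` it becomes active.
  set s : ι → ℝ := fun i => (b i - f i x) / -f i c
  obtain ⟨j, hjJ, hjs⟩ := Finset.exists_mem_eq_inf' hJ s
  set t : ℝ := ({i | f i c < 0} : Finset ι).inf' hJ s
  have hneg {i} (hi : i ∈ ({i | f i c < 0} : Finset ι)) : 0 < -f i c := by simp_all
  have hfx (i) : f i (x - t • c) = f i x + t * -f i c := by simp [sub_eq_add_neg]
  have hle {i} (hi : i ∈ ({i | f i c < 0} : Finset ι)) : t * -f i c ≤ b i - f i x :=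
    (le_div_iff₀ (hneg hi)).1 (Finset.inf'_le s hi)
  refine ⟨t, Finset.le_inf' hJ s fun i hi => div_nonneg (by linarith [hx i]) (hneg hi).le,
    fun i => ?_, (Finset.ssubset_iff_of_subset fun i hi => ?_).2 ⟨j, ?_, ?_⟩⟩
  · rw [hfx]
    by_cases hi : f i c < 0
    · linarith [hle (i := i) (by simpa using hi)]
    · simp [le_antisymm (hc i) (not_lt.1 hi), hx i]
  · rw [mem_activeSet, hfx, hcx i hi, neg_zero, mul_zero, add_zero, ← mem_activeSet]
    exact hi
  · rw [mem_activeSet, hfx, hjs, div_mul_cancel₀ _ (hneg hjJ).ne']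
    ring
  · exact fun hjx => (hneg hjJ).ne' (by simp [hcx j hjx])

end Algebraic

section Normed

variable {E : Type*} [NormedAddCommGroup E] [NormedSpace ℝ E] [FiniteDimensional ℝ E]

lemma exists_pos_mul_norm_le_of_posHomogeneous {φ : E → ℝ} (hφ : Continuous φ)
    (hpos : ∀ u ≠ 0, 0 < φ u) (hhom : ∀ a : ℝ, 0 ≤ a → ∀ z, φ (a • z) = a * φ z) :
    ∃ ε > 0, ∀ z, ε * ‖z‖ ≤ φ z := by
  obtain ⟨ε, hε, hεφ⟩ := (isCompact_sphere (0 : E) 1).exists_forall_le' hφ.continuousOn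
    fun u hu => hpos u (ne_zero_of_mem_unit_sphere ⟨u, hu⟩)
  refine ⟨ε, hε, fun z => ?_⟩
  rcases eq_or_ne z 0 with rfl | hz
  · simp [show φ 0 = 0 by simpa using hhom 0 le_rfl 0]
  · have hu : ‖z‖⁻¹ • z ∈ Metric.sphere (0 : E) 1 := by simp [norm_smul, hz]
    calc ε * ‖z‖ ≤ φ (‖z‖⁻¹ • z) * ‖z‖ := by gcongr; exact hεφ _ hu
      _ = φ z := by
        rw [hhom _ (by positivity), mul_comm, ← mul_assoc, mul_inv_cancel₀ (norm_ne_zero_iff.2 hz),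
          one_mul]

variable {ι : Type*} {f : ι → E →ₗ[ℝ] ℝ} {b : ι → ℝ}

lemma isExposed_face (S : Finset ι) : IsExposed ℝ (polyhedron f b) (face f b S) := by
  rintro ⟨z₀, hz₀⟩
  refine ⟨(∑ i ∈ S, f i).toContinuousLinearMap, Set.ext fun z => ?_⟩
  have hmax : ∀ y ∈ polyhedron f b, ∑ i ∈ S, f i y ≤ ∑ i ∈ S, b i :=
    fun y hy => Finset.sum_le_sum fun i _ => hy i
  simp only [mem_ofPred_eq, LinearMap.coe_toContinuousLinearMap', LinearMap.coe_sum,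
    Finset.sum_apply]
  constructor
  · rintro ⟨hz, hzS⟩
    exact ⟨hz, fun y hy => (hmax y hy).trans (Finset.sum_congr rfl hzS).ge⟩
  · rintro ⟨hz, hzmax⟩
    refine ⟨hz, (Finset.sum_eq_sum_iff_of_le fun i _ => hz i).1 ((hmax z hz).antisymm ?_)⟩
    calc ∑ i ∈ S, b i = ∑ i ∈ S, f i z₀ := (Finset.sum_congr rfl hz₀.2).symm
      _ ≤ ∑ i ∈ S, f i z := hzmax z₀ hz₀.1

variable [Fintype ι]

lemma exists_ne_zero_mem_polyhedron_of_not_isBounded_face {S : Finset ι}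
    (h : ¬ IsBounded (face f b S)) : ∃ c ≠ 0, c ∈ polyhedron f 0 ∧ ∀ i ∈ S, f i c = 0 := by
  contrapose! h
  set φ : E → ℝ := fun z => ∑ i, max (f i z) 0 + ∑ i ∈ S, |f i z|
  have hcont : Continuous φ := by
    have := fun i => (f i).continuous_of_finiteDimensional
    fun_prop
  have hpos : ∀ u ≠ 0, 0 < φ u := by
    intro u hu
    have h₁ : 0 ≤ ∑ i, max (f i u) 0 := Finset.sum_nonneg fun _ _ => le_max_right _ _
    have h₂ : 0 ≤ ∑ i ∈ S, |f i u| := Finset.sum_nonneg fun _ _ => abs_nonneg _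
    by_cases hu₀ : u ∈ polyhedron f 0
    · obtain ⟨i, hi, hne⟩ := h u hu hu₀
      have : 0 < ∑ i ∈ S, |f i u| :=
        Finset.sum_pos' (fun _ _ => abs_nonneg _) ⟨i, hi, abs_pos.2 hne⟩
      linarith
    · obtain ⟨i, hi⟩ : ∃ i, 0 < f i u := by simpa [polyhedron] using hu₀
      have : 0 < ∑ i, max (f i u) 0 :=
        Finset.sum_pos' (fun _ _ => le_max_right _ _) ⟨i, Finset.mem_univ _, lt_max_of_lt_left hi⟩
      linarith
  have hhom : ∀ a : ℝ, 0 ≤ a → ∀ z, φ (a • z) = a * φ z := by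
    intro a ha z
    simp [φ, abs_mul, abs_of_nonneg ha, mul_max_of_nonneg _ _ ha, Finset.mul_sum, mul_add]
  obtain ⟨ε, hε, hεφ⟩ := exists_pos_mul_norm_le_of_posHomogeneous hcont hpos hhom
  refine isBounded_iff_forall_norm_le.2 ⟨(∑ i, max (b i) 0 + ∑ i ∈ S, |b i|) / ε, fun z hz => ?_⟩
  rw [le_div_iff₀ hε, mul_comm]
  refine (hεφ z).trans (add_le_add (Finset.sum_le_sum fun i _ => max_le_max_right 0 (hz.1 i))
    (Finset.sum_le_sum fun i hi => (congrArg abs (hz.2 i hi)).le))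

theorem mem_boundedFaces_add_of_mem_polyhedron (hline : ∀ c, (∀ i, f i c = 0) → c = 0) {x : E}
    (hx : x ∈ polyhedron f b) :
    x ∈ ⋃₀ {F | IsExposed ℝ (polyhedron f b) F ∧ IsBounded F} + polyhedron f 0 := by
  obtain ⟨S, hS⟩ : ∃ S, activeSet f b x = S := ⟨_, rfl⟩
  induction S using WellFoundedGT.induction generalizing x with
  | _ S ih =>
  subst hS
  by_cases hbdd : IsBounded (face f b (activeSet f b x))
  · exact ⟨x, ⟨_, ⟨isExposed_face _, hbdd⟩, mem_face_activeSet hx⟩, 0, fun i => by simp,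
      add_zero x⟩
  obtain ⟨c, hc0, hc, hcx⟩ := exists_ne_zero_mem_polyhedron_of_not_isBounded_face hbdd
  obtain ⟨i₀, hi₀⟩ : ∃ i, f i c < 0 := by
    by_contra! h
    exact hc0 (hline c fun i => (hc i).antisymm (h i))
  obtain ⟨t, ht, hx', hlt⟩ := exists_activeSet_lt_sub_smul hx hc hcx hi₀
  obtain ⟨y, hy, c', hc', hyc'⟩ := ih _ hlt hx' rfl
  exact ⟨y, hy, c' + t • c, add_smul_mem_polyhedron hc' hc ht,
    by beta_reduce at hyc' ⊢; rw [← add_assoc, hyc', sub_add_cancel]⟩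

end Normed

end Polyhedron

open Polyhedron

/-- A pointed (line-free) convex polyhedron `P` with recession cone `C` satisfies
`P = ∂_f P + C`, where `∂_f P` is the union of the bounded (exposed) faces of `P`. -/
theorem stmt_2 (n k : ℕ) (f : Fin k → ((Fin n → ℝ) →ₗ[ℝ] ℝ)) (b : Fin k → ℝ)
    (P : Set (Fin n → ℝ)) (hP : P = {x | ∀ i, f i x ≤ b i})
    (hpointed : ¬ ∃ (x w : Fin n → ℝ), w ≠ 0 ∧ ∀ t : ℝ, x + t • w ∈ P)
    (C : Set (Fin n → ℝ)) (hC : C = {v | ∀ x ∈ P, ∀ t : ℝ, 0 ≤ t → x + t • v ∈ P}) :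
    P = (⋃₀ {F | IsExposed ℝ P F ∧ Bornology.IsBounded F}) + C := by
  subst hC hP
  have hcone : polyhedron f 0 ⊆
      {v | ∀ x ∈ polyhedron f b, ∀ t : ℝ, 0 ≤ t → x + t • v ∈ polyhedron f b} :=
    fun c hc x hx t ht => add_smul_mem_polyhedron hx hc ht
  refine subset_antisymm (fun x hx => ?_) ?_
  · have hline : ∀ c, (∀ i, f i c = 0) → c = 0 := fun c hc => by
      by_contra hc0
      exact hpointed ⟨x, c, hc0, fun t i => by simpa [hc i] using hx i⟩
    exact add_subset_add_left hcone (mem_boundedFaces_add_of_mem_polyhedron hline hx)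
  · rintro _ ⟨y, ⟨F, ⟨hF, -⟩, hyF⟩, c, hc, rfl⟩
    simpa using hc y (hF.subset hyF) 1 zero_le_one
end

section
/- Let P ⊆ ℝ² be a smooth lattice polygon containing at least four lattice points, and let e₁, e₂ be two edges of P sharing a common vertex v. Then there exists a unimodular parallelogram contained in P having two of its sides contained in e₁ and e₂ respectively, with v as a vertex. Concretely, if u₁, u₂ are the primitive lattice vectors along e₁ and e₂ emanating from v, then the parallelogram with vertices v, v+u₁, v+u₂, v+u₁+u₂ is contained in P. -/
open Set

/-- The embedding of the lattice `ℤ²` into `ℝ²`. -/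
def ι2 (z : Fin 2 → ℤ) : Fin 2 → ℝ := fun i => (z i : ℝ)

/-- `E` is an edge of `P`: an exposed face which is a nondegenerate segment. -/
def IsEdge (P E : Set (Fin 2 → ℝ)) : Prop :=
  IsExposed ℝ P E ∧ ∃ a b : Fin 2 → ℝ, a ≠ b ∧ E = segment ℝ a b

/-- `u` is the primitive lattice vector along the edge `E` emanating from the
lattice vertex `v`: `u` is primitive and `E` is the segment from `v` to `v + k•u`. -/
def PrimDirFrom (v : Fin 2 → ℤ) (E : Set (Fin 2 → ℝ)) (u : Fin 2 → ℤ) : Prop :=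
  Int.gcd (u 0) (u 1) = 1 ∧
  ∃ k : ℕ, 1 ≤ k ∧ E = segment ℝ (ι2 v) (ι2 v + (k : ℝ) • ι2 u)

/-- A lattice polygon: convex hull of finitely many lattice points, with nonempty interior. -/
def IsLatticePolygon (P : Set (Fin 2 → ℝ)) : Prop :=
  (∃ S : Finset (Fin 2 → ℤ), P = convexHull ℝ (ι2 '' (S : Set (Fin 2 → ℤ)))) ∧
  (interior P).Nonempty

/-- A smooth lattice polygon: at each vertex the primitive vectors along the two edges
emanating from it form a basis of `ℤ²` (determinant `±1`). -/
def IsSmoothPolygon (P : Set (Fin 2 → ℝ)) : Prop :=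
  IsLatticePolygon P ∧
  ∀ (w : Fin 2 → ℤ) (E₁ E₂ : Set (Fin 2 → ℝ)) (w₁ w₂ : Fin 2 → ℤ),
    IsEdge P E₁ → IsEdge P E₂ → E₁ ≠ E₂ →
    PrimDirFrom w E₁ w₁ → PrimDirFrom w E₂ w₂ →
    w₁ 0 * w₂ 1 - w₁ 1 * w₂ 0 = 1 ∨ w₁ 0 * w₂ 1 - w₁ 1 * w₂ 0 = -1

namespace SP3
variable (V0 V1 A B C D e : ℝ)

def pt (α β : ℝ) : Fin 2 → ℝ := ![V0 + α*A + β*C, V1 + α*B + β*D]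

def cx (p : Fin 2 → ℝ) : ℝ := e * ((p 0 - V0) * D - (p 1 - V1) * C)
def cy (p : Fin 2 → ℝ) : ℝ := e * (A * (p 1 - V1) - B * (p 0 - V0))

lemma cx_pt (he : e * (A*D - B*C) = 1) (α β : ℝ) : cx V0 V1 C D e (pt V0 V1 A B C D α β) = α := by
  simp only [cx, pt, Matrix.cons_val_zero, Matrix.cons_val_one, Matrix.head_cons]
  linear_combination α * he

lemma cy_pt (he : e * (A*D - B*C) = 1) (α β : ℝ) : cy V0 V1 A B e (pt V0 V1 A B C D α β) = β := by
  simp only [cy, pt, Matrix.cons_val_zero, Matrix.cons_val_one, Matrix.head_cons]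
  linear_combination β * he

lemma rep (he : e * (A*D - B*C) = 1) (p : Fin 2 → ℝ) :
    p = pt V0 V1 A B C D (cx V0 V1 C D e p) (cy V0 V1 A B e p) := by
  funext i
  fin_cases i <;> simp [pt, cx, cy]
  · linear_combination (V0 - p 0) * he
  · linear_combination (V1 - p 1) * he

lemma combo {c c' : ℝ} (h : c + c' = 1) (α β α' β' : ℝ) :
    c • pt V0 V1 A B C D α β + c' • pt V0 V1 A B C D α' β'
      = pt V0 V1 A B C D (c*α + c'*α') (c*β + c'*β') := by
  funext i
  fin_cases i <;> simp [pt]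
  · linear_combination V0 * h
  · linear_combination V1 * h

lemma pt_decomp (α β : ℝ) :
    pt V0 V1 A B C D α β = pt V0 V1 A B C D 0 0 + α • ![A, B] + β • ![C, D] := by
  funext i
  fin_cases i <;> simp [pt]

lemma clm_pt (l : (Fin 2 → ℝ) →L[ℝ] ℝ) (α β : ℝ) :
    l (pt V0 V1 A B C D α β) = l (pt V0 V1 A B C D 0 0) + α * l ![A, B] + β * l ![C, D] := by
  rw [pt_decomp V0 V1 A B C D α β, map_add, map_add, map_smul, map_smul, smul_eq_mul, smul_eq_mul]

end SP3

set_option maxHeartbeats 4000000 in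
/-- Two neighboring edges of a smooth lattice polygon containing at least four lattice
points are also neighboring edges of a unimodular parallelogram contained in the polygon. -/
theorem stmt_3 (P : Set (Fin 2 → ℝ)) (hP : IsSmoothPolygon P)
    (hpts : 4 ≤ {z : Fin 2 → ℤ | ι2 z ∈ P}.ncard)
    (v u₁ u₂ : Fin 2 → ℤ) (E₁ E₂ : Set (Fin 2 → ℝ))
    (hE₁ : IsEdge P E₁) (hE₂ : IsEdge P E₂) (hne : E₁ ≠ E₂)
    (hd₁ : PrimDirFrom v E₁ u₁) (hd₂ : PrimDirFrom v E₂ u₂) :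
    convexHull ℝ {ι2 v, ι2 v + ι2 u₁, ι2 v + ι2 u₂, ι2 v + ι2 u₁ + ι2 u₂} ⊆ P := by
  obtain ⟨⟨⟨S, hS⟩, hint⟩, hsmooth⟩ := hP
  have hPconv : Convex ℝ P := hS ▸ convex_convexHull ℝ _
  obtain ⟨hg₁, k₁, hk₁, hE₁seg⟩ := id hd₁
  obtain ⟨hg₂, k₂, hk₂, hE₂seg⟩ := id hd₂
  have hdet := hsmooth v E₁ E₂ u₁ u₂ hE₁ hE₂ hne hd₁ hd₂
  -- real coordinates
  set e : ℝ := ((u₁ 0 * u₂ 1 - u₁ 1 * u₂ 0 : ℤ) : ℝ) with he_def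
  have hcast : e = (u₁ 0:ℝ)*(u₂ 1:ℝ) - (u₁ 1:ℝ)*(u₂ 0:ℝ) := by rw [he_def]; push_cast; ring
  have he : e * ((u₁ 0 : ℝ) * (u₂ 1 : ℝ) - (u₁ 1 : ℝ) * (u₂ 0 : ℝ)) = 1 := by
    rw [← hcast]; rcases hdet with h | h <;> rw [he_def, h] <;> norm_num
  set Q : ℝ → ℝ → (Fin 2 → ℝ) :=
    SP3.pt (v 0) (v 1) (u₁ 0) (u₁ 1) (u₂ 0) (u₂ 1) with hQ_def
  set CX : (Fin 2 → ℝ) → ℝ := SP3.cx (v 0) (v 1) (u₂ 0) (u₂ 1) e with hCX_def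
  set CY : (Fin 2 → ℝ) → ℝ := SP3.cy (v 0) (v 1) (u₁ 0) (u₁ 1) e with hCY_def
  have hcx : ∀ α β : ℝ, CX (Q α β) = α := fun α β => SP3.cx_pt _ _ _ _ _ _ _ he α β
  have hcy : ∀ α β : ℝ, CY (Q α β) = β := fun α β => SP3.cy_pt _ _ _ _ _ _ _ he α β
  have hrep : ∀ p : Fin 2 → ℝ, p = Q (CX p) (CY p) := fun p => SP3.rep _ _ _ _ _ _ _ he p
  have hcombo : ∀ {c c' : ℝ}, c + c' = 1 → ∀ α β α' β' : ℝ,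
      c • Q α β + c' • Q α' β' = Q (c*α + c'*α') (c*β + c'*β') :=
    fun h α β α' β' => SP3.combo _ _ _ _ _ _ h α β α' β'
  -- rewriting the given data
  have hιv : ι2 v = Q 0 0 := by
    funext i; fin_cases i <;> simp [ι2, hQ_def, SP3.pt]
  have hQinj : ∀ {α β α' β' : ℝ}, Q α β = Q α' β' → α = α' ∧ β = β' := by
    intro α β α' β' h
    constructor
    · rw [← hcx α β, h, hcx]
    · rw [← hcy α β, h, hcy]
  have hend₁ : ι2 v + (k₁ : ℝ) • ι2 u₁ = Q k₁ 0 := by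
    funext i; fin_cases i <;> simp [ι2, hQ_def, SP3.pt] <;> ring
  have hend₂ : ι2 v + (k₂ : ℝ) • ι2 u₂ = Q 0 k₂ := by
    funext i; fin_cases i <;> simp [ι2, hQ_def, SP3.pt] <;> ring
  have hE₁seg' : E₁ = segment ℝ (Q 0 0) (Q k₁ 0) := by rw [hE₁seg, hιv, ← hend₁, hιv]
  have hE₂seg' : E₂ = segment ℝ (Q 0 0) (Q 0 k₂) := by rw [hE₂seg, hιv, ← hend₂, hιv]
  have hE₁P : E₁ ⊆ P := hE₁.1.subset
  have hE₂P : E₂ ⊆ P := hE₂.1.subset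
  have hQ00 : Q 0 0 ∈ P := hE₁P (hE₁seg' ▸ left_mem_segment ℝ _ _)
  have hQk₁ : Q k₁ 0 ∈ P := hE₁P (hE₁seg' ▸ right_mem_segment ℝ _ _)
  have hQk₂ : Q 0 k₂ ∈ P := hE₂P (hE₂seg' ▸ right_mem_segment ℝ _ _)
  have hk₁R : (1:ℝ) ≤ (k₁:ℝ) := by exact_mod_cast hk₁
  have hk₂R : (1:ℝ) ≤ (k₂:ℝ) := by exact_mod_cast hk₂
  have hk₁0 : (k₁:ℝ) ≠ 0 := by linarith
  have hk₂0 : (k₂:ℝ) ≠ 0 := by linarith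
  have hmemQ : ∀ {c c' : ℝ} (α β α' β' : ℝ), Q α β ∈ P → Q α' β' ∈ P → 0 ≤ c → 0 ≤ c' →
      c + c' = 1 → Q (c*α + c'*α') (c*β + c'*β') ∈ P := by
    intro c c' α β α' β' hx hy hc hc' hcc
    rw [← hcombo hcc]
    exact hPconv hx hy hc hc' hcc
  have hQ10 : Q 1 0 ∈ P := by
    have hc : (1 - 1/(k₁:ℝ)) + 1/(k₁:ℝ) = 1 := by ring
    have h1 : (0:ℝ) ≤ 1 - 1/(k₁:ℝ) := by
      have : 1/(k₁:ℝ) ≤ 1 := by rw [div_le_one (by linarith)]; linarith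
      linarith
    have hm := hmemQ 0 0 (k₁:ℝ) 0 hQ00 hQk₁ h1 (by positivity) hc
    rw [show (1 - 1/(k₁:ℝ))*0 + (1/(k₁:ℝ))*(k₁:ℝ) = 1 by field_simp; ring,
        show (1 - 1/(k₁:ℝ))*0 + (1/(k₁:ℝ))*0 = 0 by ring] at hm
    exact hm
  have hQ01 : Q 0 1 ∈ P := by
    have hc : (1 - 1/(k₂:ℝ)) + 1/(k₂:ℝ) = 1 := by ring
    have h1 : (0:ℝ) ≤ 1 - 1/(k₂:ℝ) := by
      have : 1/(k₂:ℝ) ≤ 1 := by rw [div_le_one (by linarith)]; linarith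
      linarith
    have hm := hmemQ 0 0 0 (k₂:ℝ) hQ00 hQk₂ h1 (by positivity) hc
    rw [show (1 - 1/(k₂:ℝ))*0 + (1/(k₂:ℝ))*0 = 0 by ring,
        show (1 - 1/(k₂:ℝ))*0 + (1/(k₂:ℝ))*(k₂:ℝ) = 1 by field_simp; ring] at hm
    exact hm
  -- the exposed functional for E₁
  obtain ⟨l₁, hl₁⟩ := hE₁.1 ⟨Q 0 0, hE₁seg' ▸ left_mem_segment ℝ _ _⟩
  have hv₁ : Q 0 0 ∈ E₁ := hE₁seg' ▸ left_mem_segment ℝ _ _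
  have hb₁ : Q k₁ 0 ∈ E₁ := hE₁seg' ▸ right_mem_segment ℝ _ _
  have hmax₁ : ∀ y ∈ P, l₁ y ≤ l₁ (Q 0 0) := by
    have := hl₁ ▸ hv₁; exact this.2
  have hmax₁' : ∀ y ∈ P, l₁ y ≤ l₁ (Q k₁ 0) := by
    have := hl₁ ▸ hb₁; exact this.2
  have hl₁Q : ∀ α β : ℝ, l₁ (Q α β)
      = l₁ (Q 0 0) + α * l₁ ![(u₁ 0 : ℝ), (u₁ 1 : ℝ)] + β * l₁ ![(u₂ 0 : ℝ), (u₂ 1 : ℝ)] :=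
    fun α β => SP3.clm_pt _ _ _ _ _ _ l₁ α β
  have hLA₁ : l₁ ![(u₁ 0 : ℝ), (u₁ 1 : ℝ)] = 0 := by
    have h1 := hmax₁ _ (hE₁P hb₁)
    have h2 := hmax₁' _ (hE₁P hv₁)
    have h3 : l₁ (Q k₁ 0) = l₁ (Q 0 0) := le_antisymm h1 h2
    rw [hl₁Q] at h3
    have : (k₁:ℝ) * l₁ ![(u₁ 0 : ℝ), (u₁ 1 : ℝ)] = 0 := by linarith
    rcases mul_eq_zero.1 this with h | h
    · exact absurd h hk₁0
    · exact h
  have hLC₁ : l₁ ![(u₂ 0 : ℝ), (u₂ 1 : ℝ)] < 0 := by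
    have h1 := hmax₁ _ hQk₂
    rw [hl₁Q] at h1
    have h2 : (k₂:ℝ) * l₁ ![(u₂ 0 : ℝ), (u₂ 1 : ℝ)] ≤ 0 := by linarith
    have hle : l₁ ![(u₂ 0 : ℝ), (u₂ 1 : ℝ)] ≤ 0 := by nlinarith
    rcases hle.lt_or_eq with h | h
    · exact h
    exfalso
    have h3 : l₁ (Q 0 k₂) = l₁ (Q 0 0) := by rw [hl₁Q, hLA₁, h]; ring
    have h4 : Q 0 k₂ ∈ E₁ := by
      rw [hl₁]
      exact ⟨hQk₂, fun y hy => (hmax₁ y hy).trans h3.ge⟩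
    rw [hE₁seg'] at h4
    obtain ⟨c, c', hc, hc', hcc, hcomb⟩ := h4
    rw [hcombo hcc] at hcomb
    have h5 := (hQinj hcomb).2
    simp at h5
    exact hk₂0 h5.symm
  have hynn : ∀ p ∈ P, 0 ≤ CY p := by
    intro p hp
    have h1 : l₁ (Q (CX p) (CY p)) ≤ l₁ (Q 0 0) := by rw [← hrep p]; exact hmax₁ p hp
    rw [hl₁Q, hLA₁] at h1
    nlinarith
  have hy0 : ∀ p ∈ P, CY p = 0 → p ∈ E₁ := by
    intro p hp hcyp
    have h1 : l₁ p = l₁ (Q 0 0) := by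
      conv_lhs => rw [hrep p]
      rw [hl₁Q, hLA₁, hcyp]; ring
    rw [hl₁]
    exact ⟨hp, fun y hy => (hmax₁ y hy).trans h1.ge⟩
  -- the exposed functional for E₂
  obtain ⟨l₂, hl₂⟩ := hE₂.1 ⟨Q 0 0, hE₂seg' ▸ left_mem_segment ℝ _ _⟩
  have hv₂ : Q 0 0 ∈ E₂ := hE₂seg' ▸ left_mem_segment ℝ _ _
  have hb₂ : Q 0 k₂ ∈ E₂ := hE₂seg' ▸ right_mem_segment ℝ _ _
  have hmax₂ : ∀ y ∈ P, l₂ y ≤ l₂ (Q 0 0) := by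
    have := hl₂ ▸ hv₂; exact this.2
  have hmax₂' : ∀ y ∈ P, l₂ y ≤ l₂ (Q 0 k₂) := by
    have := hl₂ ▸ hb₂; exact this.2
  have hl₂Q : ∀ α β : ℝ, l₂ (Q α β)
      = l₂ (Q 0 0) + α * l₂ ![(u₁ 0 : ℝ), (u₁ 1 : ℝ)] + β * l₂ ![(u₂ 0 : ℝ), (u₂ 1 : ℝ)] :=
    fun α β => SP3.clm_pt _ _ _ _ _ _ l₂ α β
  have hLC₂ : l₂ ![(u₂ 0 : ℝ), (u₂ 1 : ℝ)] = 0 := by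
    have h1 := hmax₂ _ (hE₂P hb₂)
    have h2 := hmax₂' _ (hE₂P hv₂)
    have h3 : l₂ (Q 0 k₂) = l₂ (Q 0 0) := le_antisymm h1 h2
    rw [hl₂Q] at h3
    have : (k₂:ℝ) * l₂ ![(u₂ 0 : ℝ), (u₂ 1 : ℝ)] = 0 := by linarith
    rcases mul_eq_zero.1 this with h | h
    · exact absurd h hk₂0
    · exact h
  have hLA₂ : l₂ ![(u₁ 0 : ℝ), (u₁ 1 : ℝ)] < 0 := by
    have h1 := hmax₂ _ hQk₁
    rw [hl₂Q] at h1
    have h2 : (k₁:ℝ) * l₂ ![(u₁ 0 : ℝ), (u₁ 1 : ℝ)] ≤ 0 := by linarith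
    have hle : l₂ ![(u₁ 0 : ℝ), (u₁ 1 : ℝ)] ≤ 0 := by nlinarith
    rcases hle.lt_or_eq with h | h
    · exact h
    exfalso
    have h3 : l₂ (Q k₁ 0) = l₂ (Q 0 0) := by rw [hl₂Q, hLC₂, h]; ring
    have h4 : Q k₁ 0 ∈ E₂ := by
      rw [hl₂]
      exact ⟨hQk₁, fun y hy => (hmax₂ y hy).trans h3.ge⟩
    rw [hE₂seg'] at h4
    obtain ⟨c, c', hc, hc', hcc, hcomb⟩ := h4
    rw [hcombo hcc] at hcomb
    have h5 := (hQinj hcomb).1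
    simp at h5
    exact hk₁0 h5.symm
  have hxnn : ∀ p ∈ P, 0 ≤ CX p := by
    intro p hp
    have h1 : l₂ (Q (CX p) (CY p)) ≤ l₂ (Q 0 0) := by rw [← hrep p]; exact hmax₂ p hp
    rw [hl₂Q, hLC₂] at h1
    nlinarith
  have hx0 : ∀ p ∈ P, CX p = 0 → p ∈ E₂ := by
    intro p hp hcxp
    have h1 : l₂ p = l₂ (Q 0 0) := by
      conv_lhs => rw [hrep p]
      rw [hl₂Q, hLC₂, hcxp]; ring
    rw [hl₂]
    exact ⟨hp, fun y hy => (hmax₂ y hy).trans h1.ge⟩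
  -- integer coordinates of lattice points
  set az : (Fin 2 → ℤ) → ℤ := fun z =>
    (u₁ 0 * u₂ 1 - u₁ 1 * u₂ 0) * ((z 0 - v 0) * u₂ 1 - (z 1 - v 1) * u₂ 0) with haz_def
  set bz : (Fin 2 → ℤ) → ℤ := fun z =>
    (u₁ 0 * u₂ 1 - u₁ 1 * u₂ 0) * (u₁ 0 * (z 1 - v 1) - u₁ 1 * (z 0 - v 0)) with hbz_def
  have hazr : ∀ z : Fin 2 → ℤ, (az z : ℝ) = CX (ι2 z) := by
    intro z
    rw [haz_def, hCX_def]
    simp only [SP3.cx, ι2, he_def]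
    push_cast
    ring
  have hbzr : ∀ z : Fin 2 → ℤ, (bz z : ℝ) = CY (ι2 z) := by
    intro z
    rw [hbz_def, hCY_def]
    simp only [SP3.cy, ι2, he_def]
    push_cast
    ring
  have hlat : ∀ z : Fin 2 → ℤ, ι2 z = Q (az z : ℝ) (bz z : ℝ) := by
    intro z
    conv_lhs => rw [hrep (ι2 z)]
    rw [hazr, hbzr]
  have haznn : ∀ z : Fin 2 → ℤ, ι2 z ∈ P → 0 ≤ az z := by
    intro z hz
    have := hxnn _ hz
    rw [← hazr] at this
    exact_mod_cast this
  have hbznn : ∀ z : Fin 2 → ℤ, ι2 z ∈ P → 0 ≤ bz z := by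
    intro z hz
    have := hynn _ hz
    rw [← hbzr] at this
    exact_mod_cast this
  -- an interior-ish lattice point gives the fourth parallelogram vertex
  have hcaseA : ∀ a b : ℤ, 1 ≤ a → 1 ≤ b → Q (a:ℝ) (b:ℝ) ∈ P → Q 1 1 ∈ P := by
    intro a b ha hb hz
    by_cases hab : a = 1 ∧ b = 1
    · obtain ⟨rfl, rfl⟩ := hab
      norm_num at hz
      exact hz
    · have hs3 : 3 ≤ a + b := by omega
      have haR : (1:ℝ) ≤ (a:ℝ) := by exact_mod_cast ha
      have hbR : (1:ℝ) ≤ (b:ℝ) := by exact_mod_cast hb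
      have hs3R : (3:ℝ) ≤ (a:ℝ) + (b:ℝ) := by exact_mod_cast hs3
      have hden2 : (a:ℝ)+(b:ℝ)-2 ≠ 0 := by linarith
      have hden1 : (a:ℝ)+(b:ℝ)-1 ≠ 0 := by linarith
      have h1 : (0:ℝ) ≤ ((b:ℝ)-1)/((a:ℝ)+(b:ℝ)-2) := by
        apply div_nonneg <;> linarith
      have h2 : (0:ℝ) ≤ ((a:ℝ)-1)/((a:ℝ)+(b:ℝ)-2) := by
        apply div_nonneg <;> linarith
      have h3 : ((b:ℝ)-1)/((a:ℝ)+(b:ℝ)-2) + ((a:ℝ)-1)/((a:ℝ)+(b:ℝ)-2) = 1 := by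
        field_simp
        ring
      have hW := hmemQ 1 0 0 1 hQ10 hQ01 h1 h2 h3
      have h4 : (0:ℝ) ≤ 1/((a:ℝ)+(b:ℝ)-1) := by
        apply div_nonneg <;> linarith
      have h5 : (0:ℝ) ≤ ((a:ℝ)+(b:ℝ)-2)/((a:ℝ)+(b:ℝ)-1) := by
        apply div_nonneg <;> linarith
      have h6 : 1/((a:ℝ)+(b:ℝ)-1) + ((a:ℝ)+(b:ℝ)-2)/((a:ℝ)+(b:ℝ)-1) = 1 := by
        field_simp
        ring
      have hfin := hmemQ _ _ _ _ hz hW h4 h5 h6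
      rw [show (1/((a:ℝ)+(b:ℝ)-1))*(a:ℝ) + (((a:ℝ)+(b:ℝ)-2)/((a:ℝ)+(b:ℝ)-1)) *
            (((b:ℝ)-1)/((a:ℝ)+(b:ℝ)-2)*1 + ((a:ℝ)-1)/((a:ℝ)+(b:ℝ)-2)*0) = 1 by
          field_simp; ring,
        show (1/((a:ℝ)+(b:ℝ)-1))*(b:ℝ) + (((a:ℝ)+(b:ℝ)-2)/((a:ℝ)+(b:ℝ)-1)) *
            (((b:ℝ)-1)/((a:ℝ)+(b:ℝ)-2)*0 + ((a:ℝ)-1)/((a:ℝ)+(b:ℝ)-2)*1) = 1 by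
          field_simp; ring] at hfin
      exact hfin
  have hQ11 : Q 1 1 ∈ P := by
    by_cases hex : ∃ z : Fin 2 → ℤ, ι2 z ∈ P ∧ 1 ≤ az z ∧ 1 ≤ bz z
    · obtain ⟨z, hzP, hza, hzb⟩ := hex
      rw [hlat z] at hzP
      exact hcaseA _ _ hza hzb hzP
    · push_neg at hex
      have hz0 : ∀ z : Fin 2 → ℤ, ι2 z ∈ P → az z = 0 ∨ bz z = 0 := by
        intro z hz
        have h1 := haznn z hz
        have h2 := hbznn z hz
        by_contra h
        push_neg at h
        have h3 := hex z hz (by omega)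
        omega
      exfalso
      -- first, gcd k₁ k₂ = 1: otherwise there is a lattice point on the hypotenuse
      have hgcd : Nat.gcd k₁ k₂ = 1 := by
        by_contra hg
        have hd1 : 1 ≤ Nat.gcd k₁ k₂ := Nat.gcd_pos_of_pos_left _ (by omega)
        have hd2 : 2 ≤ Nat.gcd k₁ k₂ := by omega
        obtain ⟨m₁, hm₁⟩ := Nat.gcd_dvd_left k₁ k₂
        obtain ⟨m₂, hm₂⟩ := Nat.gcd_dvd_right k₁ k₂
        set d := Nat.gcd k₁ k₂ with hd_def
        have hm₁1 : 1 ≤ m₁ := by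
          rcases Nat.eq_zero_or_pos m₁ with h | h
          · rw [h, Nat.mul_zero] at hm₁; omega
          · exact h
        have hm₂1 : 1 ≤ m₂ := by
          rcases Nat.eq_zero_or_pos m₂ with h | h
          · rw [h, Nat.mul_zero] at hm₂; omega
          · exact h
        set z : Fin 2 → ℤ := fun i => v i + ((m₁*(d-1) : ℕ) : ℤ) * u₁ i + ((m₂ : ℕ) : ℤ) * u₂ i
          with hz_def
        have hzQ : ι2 z = Q ((m₁*(d-1) : ℕ) : ℝ) ((m₂ : ℕ) : ℝ) := by
          funext i
          fin_cases i <;> simp [ι2, hz_def, hQ_def, SP3.pt] <;> push_cast <;> ring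
        have hdR : (2:ℝ) ≤ (d:ℝ) := by exact_mod_cast hd2
        have hdne : (d:ℝ) ≠ 0 := by linarith
        have hc1 : (0:ℝ) ≤ 1 - 1/(d:ℝ) := by
          have : 1/(d:ℝ) ≤ 1 := by rw [div_le_one (by linarith)]; linarith
          linarith
        have hc2 : (0:ℝ) ≤ 1/(d:ℝ) := by positivity
        have hcc : (1 - 1/(d:ℝ)) + 1/(d:ℝ) = 1 := by ring
        have hm := hmemQ _ _ _ _ hQk₁ hQk₂ hc1 hc2 hcc
        have e₁ : (1 - 1/(d:ℝ))*(k₁:ℝ) + (1/(d:ℝ))*0 = ((m₁*(d-1) : ℕ) : ℝ) := by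
          have hk : (k₁:ℝ) = (d:ℝ)*(m₁:ℝ) := by exact_mod_cast hm₁
          rw [hk]
          push_cast [Nat.cast_sub (by omega : 1 ≤ d)]
          field_simp
          ring
        have e₂ : (1 - 1/(d:ℝ))*0 + (1/(d:ℝ))*(k₂:ℝ) = ((m₂ : ℕ) : ℝ) := by
          have hk : (k₂:ℝ) = (d:ℝ)*(m₂:ℝ) := by exact_mod_cast hm₂
          rw [hk]
          field_simp
          ring
        rw [e₁, e₂, ← hzQ] at hm
        have haz : az z = ((m₁*(d-1) : ℕ) : ℤ) := by
          have h1 : (az z : ℝ) = ((m₁*(d-1) : ℕ) : ℝ) := by rw [hazr, hzQ, hcx]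
          exact_mod_cast h1
        have hbz : bz z = ((m₂ : ℕ) : ℤ) := by
          have h1 : (bz z : ℝ) = ((m₂ : ℕ) : ℝ) := by rw [hbzr, hzQ, hcy]
          exact_mod_cast h1
        have hm₁d : 1 ≤ m₁ * (d-1) := Nat.one_le_iff_ne_zero.mpr
          (Nat.mul_ne_zero (by omega) (by omega))
        rcases hz0 z hm with h | h <;> omega
      -- the third edge: the hypotenuse of the triangle
      set u₃ : Fin 2 → ℤ := fun i => (k₂:ℤ) * u₂ i - (k₁:ℤ) * u₁ i with hu₃_def
      have hu₃gcd : Int.gcd (u₃ 0) (u₃ 1) = 1 := by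
        have h0 : (Int.gcd (u₃ 0) (u₃ 1) : ℤ) ∣ u₃ 0 := Int.gcd_dvd_left _ _
        have h1 : (Int.gcd (u₃ 0) (u₃ 1) : ℤ) ∣ u₃ 1 := Int.gcd_dvd_right _ _
        have hdk₁ : (Int.gcd (u₃ 0) (u₃ 1) : ℤ) ∣ (k₁:ℤ) := by
          have h2 : (Int.gcd (u₃ 0) (u₃ 1) : ℤ) ∣ (u₂ 0 * u₃ 1 - u₂ 1 * u₃ 0) :=
            dvd_sub (h1.mul_left _) (h0.mul_left _)
          have h3 : u₂ 0 * u₃ 1 - u₂ 1 * u₃ 0 = (k₁:ℤ) * (u₁ 0 * u₂ 1 - u₁ 1 * u₂ 0) := by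
            simp only [hu₃_def]
            ring
          rw [h3] at h2
          rcases hdet with h | h <;> rw [h] at h2 <;> simpa using h2
        have hdk₂ : (Int.gcd (u₃ 0) (u₃ 1) : ℤ) ∣ (k₂:ℤ) := by
          have h2 : (Int.gcd (u₃ 0) (u₃ 1) : ℤ) ∣ (u₁ 0 * u₃ 1 - u₁ 1 * u₃ 0) :=
            dvd_sub (h1.mul_left _) (h0.mul_left _)
          have h3 : u₁ 0 * u₃ 1 - u₁ 1 * u₃ 0 = (k₂:ℤ) * (u₁ 0 * u₂ 1 - u₁ 1 * u₂ 0) := by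
            simp only [hu₃_def]
            ring
          rw [h3] at h2
          rcases hdet with h | h <;> rw [h] at h2 <;> simpa using h2
        have hdvd : Int.gcd (u₃ 0) (u₃ 1) ∣ Nat.gcd k₁ k₂ :=
          Nat.dvd_gcd (Int.natCast_dvd_natCast.mp hdk₁) (Int.natCast_dvd_natCast.mp hdk₂)
        rw [hgcd] at hdvd
        exact Nat.dvd_one.mp hdvd
      -- P is the triangle
      have hPT : P = convexHull ℝ {Q 0 0, Q (k₁:ℝ) 0, Q 0 (k₂:ℝ)} := by
        apply Set.Subset.antisymm
        · rw [hS]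
          apply convexHull_min _ (convex_convexHull ℝ _)
          rintro p ⟨z, hzS, rfl⟩
          have hzP : ι2 z ∈ P := by
            rw [hS]; exact subset_convexHull ℝ _ (Set.mem_image_of_mem _ hzS)
          rcases hz0 z hzP with h | h
          · have hmem : ι2 z ∈ E₂ := hx0 _ hzP (by rw [← hazr, h]; norm_num)
            rw [hE₂seg', ← convexHull_pair] at hmem
            refine convexHull_mono ?_ hmem
            intro x hx
            simp only [Set.mem_insert_iff, Set.mem_singleton_iff] at hx ⊢
            tauto
          · have hmem : ι2 z ∈ E₁ := hy0 _ hzP (by rw [← hbzr, h]; norm_num)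
            rw [hE₁seg', ← convexHull_pair] at hmem
            refine convexHull_mono ?_ hmem
            intro x hx
            simp only [Set.mem_insert_iff, Set.mem_singleton_iff] at hx ⊢
            tauto
        · apply convexHull_min _ hPconv
          intro x hx
          simp only [Set.mem_insert_iff, Set.mem_singleton_iff] at hx
          rcases hx with rfl | rfl | rfl
          · exact hQ00
          · exact hQk₁
          · exact hQk₂
      -- the functional exposing the hypotenuse
      set l₃ : (Fin 2 → ℝ) →L[ℝ] ℝ :=
        (e*((k₂:ℝ)*(u₂ 1:ℝ) - (k₁:ℝ)*(u₁ 1:ℝ))) • (ContinuousLinearMap.proj 0)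
        + (e*((k₁:ℝ)*(u₁ 0:ℝ) - (k₂:ℝ)*(u₂ 0:ℝ))) • (ContinuousLinearMap.proj 1) with hl₃_def
      have hl₃app : ∀ p : Fin 2 → ℝ,
          l₃ p = (e*((k₂:ℝ)*(u₂ 1:ℝ) - (k₁:ℝ)*(u₁ 1:ℝ))) * p 0
            + (e*((k₁:ℝ)*(u₁ 0:ℝ) - (k₂:ℝ)*(u₂ 0:ℝ))) * p 1 := by
        intro p
        rw [hl₃_def]
        simp
      have hl₃AB : l₃ ![(u₁ 0:ℝ), (u₁ 1:ℝ)] = (k₂:ℝ) := by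
        rw [hl₃app]
        simp only [Matrix.cons_val_zero, Matrix.cons_val_one, Matrix.head_cons]
        linear_combination (k₂:ℝ) * he
      have hl₃CD : l₃ ![(u₂ 0:ℝ), (u₂ 1:ℝ)] = (k₁:ℝ) := by
        rw [hl₃app]
        simp only [Matrix.cons_val_zero, Matrix.cons_val_one, Matrix.head_cons]
        linear_combination (k₁:ℝ) * he
      have hl₃Q : ∀ α β : ℝ, l₃ (Q α β) = l₃ (Q 0 0) + (k₂:ℝ)*α + (k₁:ℝ)*β := by
        intro α β
        rw [hQ_def, SP3.clm_pt, hl₃AB, hl₃CD]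
        ring
      have hsegval : ∀ x ∈ segment ℝ (Q (k₁:ℝ) 0) (Q 0 (k₂:ℝ)),
          l₃ x = l₃ (Q 0 0) + (k₁:ℝ)*(k₂:ℝ) := by
        rintro x ⟨c, c', hc, hc', hcc, hcomb⟩
        rw [hcombo hcc] at hcomb
        rw [← hcomb, hl₃Q]
        linear_combination ((k₁:ℝ)*(k₂:ℝ)) * hcc
      have hk₁k₂pos : (0:ℝ) < (k₁:ℝ)*(k₂:ℝ) := by nlinarith
      have hbound : ∀ y ∈ P, l₃ y ≤ l₃ (Q 0 0) + (k₁:ℝ)*(k₂:ℝ) := by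
        intro y hy
        rw [hPT] at hy
        have hconvset : Convex ℝ {p : Fin 2 → ℝ | l₃ p ≤ l₃ (Q 0 0) + (k₁:ℝ)*(k₂:ℝ)} :=
          (convex_Iic (l₃ (Q 0 0) + (k₁:ℝ)*(k₂:ℝ))).linear_preimage
            (l₃ : (Fin 2 → ℝ) →ₗ[ℝ] ℝ)
        refine convexHull_min ?_ hconvset hy
        intro x hx
        simp only [Set.mem_insert_iff, Set.mem_singleton_iff] at hx
        rcases hx with rfl | rfl | rfl <;> simp only [Set.mem_setOf_eq] <;> rw [hl₃Q] <;> nlinarith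
      have hexp₃ : IsExposed ℝ P (segment ℝ (Q (k₁:ℝ) 0) (Q 0 (k₂:ℝ))) := by
        intro _
        refine ⟨l₃, ?_⟩
        ext x
        constructor
        · intro hx
          refine ⟨hPconv.segment_subset hQk₁ hQk₂ hx, fun y hy => ?_⟩
          rw [hsegval x hx]
          exact hbound y hy
        · rintro ⟨hxP, hxmax⟩
          have hxM : l₃ x = l₃ (Q 0 0) + (k₁:ℝ)*(k₂:ℝ) := by
            refine le_antisymm (hbound x hxP) ?_
            have h1 := hxmax (Q (k₁:ℝ) 0) hQk₁
            have h2 : l₃ (Q (k₁:ℝ) 0) = l₃ (Q 0 0) + (k₁:ℝ)*(k₂:ℝ) :=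
              hsegval _ (left_mem_segment ℝ _ _)
            linarith
          have hx' : x ∈ convexHull ℝ (insert (Q 0 0) {Q (k₁:ℝ) 0, Q 0 (k₂:ℝ)}) := hPT ▸ hxP
          rw [convexHull_insert ⟨_, Set.mem_insert _ _⟩, mem_convexJoin] at hx'
          obtain ⟨p₀, hp₀, b, hb, hxseg⟩ := hx'
          simp only [Set.mem_singleton_iff] at hp₀
          subst hp₀
          rw [convexHull_pair] at hb
          obtain ⟨c, c', hc, hc', hcc, hcomb⟩ := hxseg
          have hlb : l₃ b = l₃ (Q 0 0) + (k₁:ℝ)*(k₂:ℝ) := hsegval b hb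
          have hlx : c * l₃ (Q 0 0) + c' * l₃ b = l₃ x := by
            rw [← hcomb, map_add, map_smul, map_smul, smul_eq_mul, smul_eq_mul]
          have hc0 : c = 0 := by
            have hmul : c * ((k₁:ℝ)*(k₂:ℝ)) = 0 := by
              rw [hlb] at hlx
              rw [hxM] at hlx
              linear_combination (l₃ (Q 0 0)) * hcc + ((k₁:ℝ)*(k₂:ℝ)) * hcc - hlx
            rcases mul_eq_zero.mp hmul with h | h
            · exact h
            · exact absurd h hk₁k₂pos.ne'
          have hc1 : c' = 1 := by linarith
          rw [hc0, hc1] at hcomb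
          simp only [zero_smul, one_smul, zero_add] at hcomb
          rwa [← hcomb]
      have hedge₃ : IsEdge P (segment ℝ (Q (k₁:ℝ) 0) (Q 0 (k₂:ℝ))) := by
        refine ⟨hexp₃, Q (k₁:ℝ) 0, Q 0 (k₂:ℝ), ?_, rfl⟩
        intro h
        have h2 := (hQinj h).2
        exact hk₂0 h2.symm
      have hQ00notseg : Q 0 0 ∉ segment ℝ (Q (k₁:ℝ) 0) (Q 0 (k₂:ℝ)) := by
        intro h
        have h1 := hsegval _ h
        nlinarith
      have hE₃ne₁ : segment ℝ (Q (k₁:ℝ) 0) (Q 0 (k₂:ℝ)) ≠ E₁ := fun h => hQ00notseg (h ▸ hv₁)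
      have hE₃ne₂ : segment ℝ (Q (k₁:ℝ) 0) (Q 0 (k₂:ℝ)) ≠ E₂ := fun h => hQ00notseg (h ▸ hv₂)
      -- k₂ = 1, via smoothness at the vertex Q k₁ 0
      have hw₁ : ι2 (fun i => v i + (k₁:ℤ) * u₁ i) = Q (k₁:ℝ) 0 := by
        funext i
        fin_cases i <;> simp [ι2, hQ_def, SP3.pt] <;> push_cast <;> ring
      have hw₁u₃ : ι2 (fun i => v i + (k₁:ℤ) * u₁ i) + ((1:ℕ):ℝ) • ι2 u₃ = Q 0 (k₂:ℝ) := by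
        funext i
        fin_cases i <;> simp [ι2, hQ_def, SP3.pt, hu₃_def] <;> push_cast <;> ring
      have hw₁u₁ : ι2 (fun i => v i + (k₁:ℤ) * u₁ i) + ((k₁:ℕ):ℝ) • ι2 (fun i => -u₁ i)
          = Q 0 0 := by
        funext i
        fin_cases i <;> simp [ι2, hQ_def, SP3.pt] <;> push_cast <;> ring
      have pd₃a : PrimDirFrom (fun i => v i + (k₁:ℤ) * u₁ i)
          (segment ℝ (Q (k₁:ℝ) 0) (Q 0 (k₂:ℝ))) u₃ := by
        refine ⟨hu₃gcd, 1, le_refl 1, ?_⟩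
        rw [hw₁u₃, hw₁]
      have pd₁a : PrimDirFrom (fun i => v i + (k₁:ℤ) * u₁ i) E₁ (fun i => -u₁ i) := by
        refine ⟨?_, k₁, hk₁, ?_⟩
        · simpa [Int.gcd] using hg₁
        · rw [hw₁u₁, hw₁, hE₁seg', segment_symm]
      have hs1 := hsmooth _ _ _ _ _ hedge₃ hE₁ hE₃ne₁ pd₃a pd₁a
      have hk₂1 : k₂ = 1 := by
        have hX : u₃ 0 * ((fun i => -u₁ i) 1) - u₃ 1 * ((fun i => -u₁ i) 0)
            = (k₂:ℤ) * (u₁ 0 * u₂ 1 - u₁ 1 * u₂ 0) := by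
          simp only [hu₃_def]
          ring
        rw [hX] at hs1
        rcases hdet with h | h <;> rw [h] at hs1 <;> omega
      -- k₁ = 1, via smoothness at the vertex Q 0 k₂
      have hw₂ : ι2 (fun i => v i + (k₂:ℤ) * u₂ i) = Q 0 (k₂:ℝ) := by
        funext i
        fin_cases i <;> simp [ι2, hQ_def, SP3.pt] <;> push_cast <;> ring
      have hw₂u₃ : ι2 (fun i => v i + (k₂:ℤ) * u₂ i) + ((1:ℕ):ℝ) • ι2 (fun i => -u₃ i)
          = Q (k₁:ℝ) 0 := by
        funext i
        fin_cases i <;> simp [ι2, hQ_def, SP3.pt, hu₃_def] <;> push_cast <;> ring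
      have hw₂u₂ : ι2 (fun i => v i + (k₂:ℤ) * u₂ i) + ((k₂:ℕ):ℝ) • ι2 (fun i => -u₂ i)
          = Q 0 0 := by
        funext i
        fin_cases i <;> simp [ι2, hQ_def, SP3.pt] <;> push_cast <;> ring
      have pd₃b : PrimDirFrom (fun i => v i + (k₂:ℤ) * u₂ i)
          (segment ℝ (Q (k₁:ℝ) 0) (Q 0 (k₂:ℝ))) (fun i => -u₃ i) := by
        refine ⟨?_, 1, le_refl 1, ?_⟩
        · simpa [Int.gcd] using hu₃gcd
        · rw [hw₂u₃, hw₂, segment_symm]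
      have pd₂b : PrimDirFrom (fun i => v i + (k₂:ℤ) * u₂ i) E₂ (fun i => -u₂ i) := by
        refine ⟨?_, k₂, hk₂, ?_⟩
        · simpa [Int.gcd] using hg₂
        · rw [hw₂u₂, hw₂, hE₂seg', segment_symm]
      have hs2 := hsmooth _ _ _ _ _ hedge₃ hE₂ hE₃ne₂ pd₃b pd₂b
      have hk₁1 : k₁ = 1 := by
        have hX : (fun i => -u₃ i) 0 * ((fun i => -u₂ i) 1)
            - (fun i => -u₃ i) 1 * ((fun i => -u₂ i) 0)
            = -((k₁:ℤ) * (u₁ 0 * u₂ 1 - u₁ 1 * u₂ 0)) := by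
          simp only [hu₃_def]
          ring
        rw [hX] at hs2
        rcases hdet with h | h <;> rw [h] at hs2 <;> omega
      -- now P has at most three lattice points, contradiction
      have hι2inj : ∀ {z w : Fin 2 → ℤ}, ι2 z = ι2 w → z = w := by
        intro z w h
        funext i
        have h2 := congrFun h i
        simp only [ι2] at h2
        exact_mod_cast h2
      have hp01' : ι2 (fun i => v i + u₂ i) = Q 0 1 := by
        funext i
        fin_cases i <;> simp [ι2, hQ_def, SP3.pt] <;> push_cast <;> ring
      have hp10' : ι2 (fun i => v i + u₁ i) = Q 1 0 := by
        funext i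
        fin_cases i <;> simp [ι2, hQ_def, SP3.pt] <;> push_cast <;> ring
      have hsub : {z : Fin 2 → ℤ | ι2 z ∈ P}
          ⊆ ({v, fun i => v i + u₁ i, fun i => v i + u₂ i} : Set (Fin 2 → ℤ)) := by
        intro z hz
        simp only [Set.mem_setOf_eq] at hz
        have hann := haznn z hz
        have hbnn := hbznn z hz
        simp only [Set.mem_insert_iff, Set.mem_singleton_iff]
        rcases hz0 z hz with h | h
        · have hmem : ι2 z ∈ E₂ := hx0 _ hz (by rw [← hazr, h]; norm_num)
          rw [hE₂seg'] at hmem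
          obtain ⟨c, c', hc, hc', hcc, hcomb⟩ := hmem
          rw [hcombo hcc, hlat z] at hcomb
          have hβ := (hQinj hcomb).2
          have hble : (bz z : ℝ) ≤ 1 := by
            rw [← hβ, hk₂1]
            push_cast
            nlinarith
          have hb1 : bz z = 0 ∨ bz z = 1 := by
            have : bz z ≤ 1 := by exact_mod_cast hble
            omega
          rcases hb1 with h2 | h2
          · left
            apply hι2inj
            rw [hlat z, h, h2, hιv]
            norm_num
          · right; right
            apply hι2inj
            rw [hlat z, h, h2, hp01']
            norm_num
        · have hmem : ι2 z ∈ E₁ := hy0 _ hz (by rw [← hbzr, h]; norm_num)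
          rw [hE₁seg'] at hmem
          obtain ⟨c, c', hc, hc', hcc, hcomb⟩ := hmem
          rw [hcombo hcc, hlat z] at hcomb
          have hα := (hQinj hcomb).1
          have hale : (az z : ℝ) ≤ 1 := by
            rw [← hα, hk₁1]
            push_cast
            nlinarith
          have ha1 : az z = 0 ∨ az z = 1 := by
            have : az z ≤ 1 := by exact_mod_cast hale
            omega
          rcases ha1 with h2 | h2
          · left
            apply hι2inj
            rw [hlat z, h, h2, hιv]
            norm_num
          · right; left
            apply hι2inj
            rw [hlat z, h, h2, hp10']
            norm_num
      have h3card : ({v, fun i => v i + u₁ i, fun i => v i + u₂ i} : Set (Fin 2 → ℤ)).ncard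
          ≤ 3 := by
        refine le_trans (Set.ncard_insert_le _ _) ?_
        have h := Set.ncard_insert_le (fun i => v i + u₁ i)
          ({fun i => v i + u₂ i} : Set (Fin 2 → ℤ))
        simp only [Set.ncard_singleton] at h
        omega
      have hcard := Set.ncard_le_ncard hsub (Set.toFinite _)
      omega
  -- final assembly
  have hp10 : ι2 v + ι2 u₁ = Q 1 0 := by
    funext i; fin_cases i <;> simp [ι2, hQ_def, SP3.pt]
  have hp01 : ι2 v + ι2 u₂ = Q 0 1 := by
    funext i; fin_cases i <;> simp [ι2, hQ_def, SP3.pt]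
  have hp11 : ι2 v + ι2 u₁ + ι2 u₂ = Q 1 1 := by
    funext i; fin_cases i <;> simp [ι2, hQ_def, SP3.pt] <;> ring
  apply convexHull_min _ hPconv
  intro x hx
  simp only [Set.mem_insert_iff, Set.mem_singleton_iff] at hx
  rcases hx with rfl | rfl | rfl | rfl
  · rw [hιv]; exact hQ00
  · rw [hp10]; exact hQ10
  · rw [hp01]; exact hQ01
  · rw [hp11]; exact hQ11
end

section
/- Let P₁, P₂, Q₁, Q₂ be lattice polytopes in ℝ^n (lattice M = ℤ^n) such that P_i is covered by lattice translates of Q_i contained in P_i (i = 1, 2), and suppose (Q₁ ∩ M) + (P₂ ∩ M) = (Q₁ + P₂) ∩ M and (Q₂ ∩ M) + (P₁ ∩ M) = (Q₂ + P₁) ∩ M. Then (P₁ ∩ M) + (P₂ ∩ M) = (P₁ + P₂) ∩ M. -/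
open Set Pointwise

/-- The embedding of the lattice `ℤⁿ` into `ℝⁿ`. -/
def ιn (n : ℕ) (z : Fin n → ℤ) : Fin n → ℝ := fun i => (z i : ℝ)

lemma ιn_add (n : ℕ) (a b : Fin n → ℤ) : ιn n (a + b) = ιn n a + ιn n b := by
  funext i; simp [ιn]

lemma ιn_sub (n : ℕ) (a b : Fin n → ℤ) : ιn n (a - b) = ιn n a - ιn n b := by
  funext i; simp [ιn]

/-- If lattice polytopes `P₁, P₂` are covered by lattice translates of lattice polytopes
`Q₁, Q₂` contained in them, and the mixed surjectivity properties
`(Q₁ ∩ M) + (P₂ ∩ M) = (Q₁ + P₂) ∩ M` and `(Q₂ ∩ M) + (P₁ ∩ M) = (Q₂ + P₁) ∩ M` hold,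
then `(P₁ ∩ M) + (P₂ ∩ M) = (P₁ + P₂) ∩ M`. -/
theorem stmt_7 (n : ℕ) (P₁ P₂ Q₁ Q₂ L : Set (Fin n → ℝ))
    (hL : L = Set.range (ιn n))
    (hP₁ : ∃ S : Finset (Fin n → ℤ), S.Nonempty ∧ P₁ = convexHull ℝ (ιn n '' (S : Set (Fin n → ℤ))))
    (hP₂ : ∃ S : Finset (Fin n → ℤ), S.Nonempty ∧ P₂ = convexHull ℝ (ιn n '' (S : Set (Fin n → ℤ))))
    (hQ₁ : ∃ S : Finset (Fin n → ℤ), S.Nonempty ∧ Q₁ = convexHull ℝ (ιn n '' (S : Set (Fin n → ℤ))))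
    (hQ₂ : ∃ S : Finset (Fin n → ℤ), S.Nonempty ∧ Q₂ = convexHull ℝ (ιn n '' (S : Set (Fin n → ℤ))))
    (hcov₁ : ∀ x ∈ P₁, ∃ v : Fin n → ℤ, x ∈ ιn n v +ᵥ Q₁ ∧ ιn n v +ᵥ Q₁ ⊆ P₁)
    (hcov₂ : ∀ x ∈ P₂, ∃ v : Fin n → ℤ, x ∈ ιn n v +ᵥ Q₂ ∧ ιn n v +ᵥ Q₂ ⊆ P₂)
    (hmix₁ : (Q₁ ∩ L) + (P₂ ∩ L) = (Q₁ + P₂) ∩ L)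
    (hmix₂ : (Q₂ ∩ L) + (P₁ ∩ L) = (Q₂ + P₁) ∩ L) :
    (P₁ ∩ L) + (P₂ ∩ L) = (P₁ + P₂) ∩ L := by
  apply Set.Subset.antisymm
  · rintro x ⟨a, ⟨haP, haL⟩, b, ⟨hbP, hbL⟩, rfl⟩
    refine ⟨⟨a, haP, b, hbP, rfl⟩, ?_⟩
    rw [hL] at haL hbL ⊢
    obtain ⟨za, rfl⟩ := haL
    obtain ⟨zb, rfl⟩ := hbL
    exact ⟨za + zb, ιn_add n za zb⟩
  · rintro m ⟨⟨x₁, hx₁, x₂, hx₂, rfl⟩, hmL⟩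
    obtain ⟨v, hxv, hsub⟩ := hcov₁ x₁ hx₁
    obtain ⟨y, hy, hyv⟩ := hxv
    -- x₁ = ιn n v + y, y ∈ Q₁
    rw [hL] at hmL
    obtain ⟨zm, hzm⟩ := hmL
    have hmem : y + x₂ ∈ (Q₁ + P₂) ∩ L := by
      refine ⟨⟨y, hy, x₂, hx₂, rfl⟩, ?_⟩
      rw [hL]
      refine ⟨zm - v, ?_⟩
      rw [ιn_sub]
      have : ιn n v + y = x₁ := hyv
      rw [hzm]
      linear_combination - this
    rw [← hmix₁] at hmem
    obtain ⟨q, ⟨hqQ, hqL⟩, p, ⟨hpP, hpL⟩, hqp⟩ := hmem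
    refine ⟨ιn n v + q, ⟨hsub ⟨q, hqQ, rfl⟩, ?_⟩, p, ⟨hpP, hpL⟩, ?_⟩
    · rw [hL] at hqL ⊢
      obtain ⟨zq, rfl⟩ := hqL
      exact ⟨v + zq, ιn_add n v zq⟩
    · have : ιn n v + y = x₁ := hyv
      linear_combination this + hqp
end

section
/- Let P₁, P₂ ⊆ ℝ² be parallelograms whose eight vertices all lie on the boundary of the convex hull of P₁ ∪ P₂, and suppose P₁ ∩ P₂ = ∅. Then there exist two distinct parallel lines ℓ₁, ℓ₂ such that every vertex of P₁ and of P₂ lies on ℓ₁ ∪ ℓ₂. -/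
set_option maxHeartbeats 1000000
open Set

namespace Stmt9Aux

abbrev E := Fin 2 → ℝ




lemma coordFG {u v : E} (h : LinearIndependent ℝ ![u, v]) :
    ∃ F G : E →ₗ[ℝ] ℝ, F u = 1 ∧ F v = 0 ∧ G u = 0 ∧ G v = 1 ∧
      ∀ x : E, x = F x • u + G x • v := by
  have hcard : Fintype.card (Fin 2) = Module.finrank ℝ E := by
    simp [Module.finrank_fin_fun]
  let B : Module.Basis (Fin 2) ℝ E := basisOfLinearIndependentOfCardEqFinrank h hcard
  have hB : ⇑B = ![u, v] := coe_basisOfLinearIndependentOfCardEqFinrank h hcard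
  have hB0 : B 0 = u := by rw [hB]; rfl
  have hB1 : B 1 = v := by rw [hB]; rfl
  refine ⟨B.coord 0, B.coord 1, ?_, ?_, ?_, ?_, ?_⟩
  · rw [← hB0]; simp [Module.Basis.coord_apply]
  · rw [← hB1]; simp [Module.Basis.coord_apply]
  · rw [← hB0]; simp [Module.Basis.coord_apply]
  · rw [← hB1]; simp [Module.Basis.coord_apply]
  · intro x
    have := B.sum_repr x
    rw [Fin.sum_univ_two, hB0, hB1] at this
    simp only [Module.Basis.coord_apply]
    exact this.symm

lemma li_swap {u v : E} (h : LinearIndependent ℝ ![u, v]) :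
    LinearIndependent ℝ ![v, u] := by
  rw [linearIndependent_fin2] at h ⊢
  simp only [Matrix.cons_val_one, Matrix.head_cons, Matrix.cons_val_zero] at h ⊢
  obtain ⟨hv, huv⟩ := h
  constructor
  · rintro rfl
    exact huv 0 (by simp)
  · intro a ha
    rcases eq_or_ne a 0 with rfl | ha0
    · rw [zero_smul] at ha; exact hv ha.symm
    · exact huv a⁻¹ (by rw [← ha, smul_smul, inv_mul_cancel₀ ha0, one_smul])

lemma li_negu {u v : E} (h : LinearIndependent ℝ ![u, v]) :
    LinearIndependent ℝ ![-u, v] := by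
  rw [linearIndependent_fin2] at h ⊢
  simp only [Matrix.cons_val_one, Matrix.head_cons, Matrix.cons_val_zero] at h ⊢
  refine ⟨h.1, fun a ha => h.2 (-a) ?_⟩
  rw [neg_smul, ha, neg_neg]

lemma li_negv {u v : E} (h : LinearIndependent ℝ ![u, v]) :
    LinearIndependent ℝ ![u, -v] := by
  rw [linearIndependent_fin2] at h ⊢
  simp only [Matrix.cons_val_one, Matrix.head_cons, Matrix.cons_val_zero] at h ⊢
  refine ⟨neg_ne_zero.mpr h.1, fun a ha => h.2 (-a) ?_⟩
  rw [neg_smul, ← smul_neg, ha]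

lemma li_ne_zero_left {u v : E} (h : LinearIndependent ℝ ![u, v]) : u ≠ 0 := by
  have := li_swap h
  rw [linearIndependent_fin2] at this
  simpa using this.1

lemma li_not_smul {u v : E} (h : LinearIndependent ℝ ![u, v]) :
    ∀ a : ℝ, a • u ≠ v := by
  have := li_swap h
  rw [linearIndependent_fin2] at this
  simpa using this.2

lemma li_det_ne {u v p q : E} (h : LinearIndependent ℝ ![p, q])
    {sp tp sq tq : ℝ} (hp : p = sp • u + tp • v) (hq : q = sq • u + tq • v) :
    sp * tq - tp * sq ≠ 0 := by
  intro hdet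
  rw [linearIndependent_fin2] at h
  simp only [Matrix.cons_val_one, Matrix.head_cons, Matrix.cons_val_zero] at h
  obtain ⟨hq0, hpq⟩ := h
  rcases eq_or_ne tq 0 with htq | htq
  · rcases eq_or_ne sq 0 with hsq | hsq
    · exact hq0 (by rw [hq, htq, hsq]; simp)
    · -- tq = 0, sq ≠ 0 : sp * 0 - tp * sq = 0 → tp = 0
      have htp : tp = 0 := by
        rw [htq, mul_zero, zero_sub, neg_eq_zero] at hdet
        exact (mul_eq_zero.mp hdet).resolve_right hsq
      exact hpq (sp / sq) (by rw [hp, hq, htq, htp]; simp [smul_smul, div_mul_cancel₀ _ hsq])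
  · -- tq ≠ 0 : p = (sp/tq) • q
    apply hpq (tp / tq)
    rw [hp, hq, smul_add, smul_smul, smul_smul]
    have hsp : tp / tq * sq = sp := by
      field_simp
      nlinarith [hdet]
    rw [hsp, div_mul_cancel₀ _ htq]




lemma support_lemma {K : Set E} (hK : Convex ℝ K) {z : E}
    (hz : z ∈ interior K) {w : E} (hw : w ∉ interior K) :
    ∃ f : E →L[ℝ] ℝ, (∀ x ∈ K, f x ≤ f w) ∧ f z < f w := by
  obtain ⟨f, hf⟩ := geometric_hahn_banach_open_point hK.interior isOpen_interior hw
  refine ⟨f, fun x hx => ?_, hf z hz⟩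
  by_contra hlt
  push_neg at hlt
  have hzw : f z < f w := hf z hz
  set d : ℝ := f x - f w with hd
  set D : ℝ := f x - f z with hD
  have hd0 : 0 < d := by simp [hd]; linarith
  have hD0 : 0 < D := by simp [hD]; linarith
  set a : ℝ := min (d / (2 * D)) (1/2) with ha
  have ha0 : 0 < a := lt_min (by positivity) (by norm_num)
  have ha1 : a < 1 := lt_of_le_of_lt (min_le_right _ _) (by norm_num)
  have hmem : a • z + (1 - a) • x ∈ interior K :=
    hK.combo_interior_self_mem_interior hz hx ha0 (by linarith) (by ring)
  have := hf _ hmem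
  rw [map_add, map_smul, map_smul] at this
  have haD : a * D ≤ d / 2 := by
    have : a ≤ d / (2 * D) := min_le_left _ _
    calc a * D ≤ d / (2 * D) * D := by nlinarith
    _ = d / 2 := by field_simp
  have : a * f z + (1 - a) * f x < f w := this
  nlinarith

lemma mem_hull_box {a u v x : E} {s t : ℝ} (hs0 : 0 ≤ s) (hs1 : s ≤ 1)
    (ht0 : 0 ≤ t) (ht1 : t ≤ 1) (hx : x = a + s • u + t • v) :
    x ∈ convexHull ℝ ({a, a + u, a + v, a + u + v} : Set E) := by
  set C := convexHull ℝ ({a, a + u, a + v, a + u + v} : Set E) with hC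
  have hconv : Convex ℝ C := convex_convexHull ℝ _
  have h1 : a ∈ C := subset_convexHull ℝ _ (by simp)
  have h2 : a + u ∈ C := subset_convexHull ℝ _ (by simp)
  have h3 : a + v ∈ C := subset_convexHull ℝ _ (by simp)
  have h4 : a + u + v ∈ C := subset_convexHull ℝ _ (by simp)
  have hy0 : a + t • v ∈ C := by
    have := hconv h1 h3 (by linarith : (0:ℝ) ≤ 1 - t) ht0 (by ring)
    convert this using 1
    module
  have hy1 : a + u + t • v ∈ C := by
    have := hconv h2 h4 (by linarith : (0:ℝ) ≤ 1 - t) ht0 (by ring)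
    convert this using 1
    module
  have := hconv hy0 hy1 (by linarith : (0:ℝ) ≤ 1 - s) hs0 (by ring)
  convert this using 1
  rw [hx]
  module

lemma alpha_pos {α β s t : ℝ} (hs : 1 < s) (ht0 : 0 < t) (ht1 : t < 1)
    (h0 : 0 ≤ s * α + t * β) (h1 : α ≤ s * α + t * β) (h2 : β ≤ s * α + t * β)
    (h3 : α + β ≤ s * α + t * β) (h4 : 1/2 * α + 1/2 * β < s * α + t * β) :
    0 < α := by
  by_contra hα
  push_neg at hα
  have h5 : s * α ≤ α := by nlinarith
  rcases le_or_gt β 0 with hβ | hβ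
  · have h6 : t * β ≤ 0 := mul_nonpos_of_nonneg_of_nonpos (le_of_lt ht0) hβ
    have hα0 : α = 0 := le_antisymm hα (by linarith)
    have htβ : t * β = 0 := by
      have : s * α = 0 := by rw [hα0, mul_zero]
      linarith [h0, h6]
    have hβ0 : β = 0 := by
      rcases mul_eq_zero.mp htβ with h | h
      · linarith
      · exact h
    rw [hα0, hβ0] at h4
    norm_num at h4
  · have h6 : t * β < β := by nlinarith
    linarith

lemma support_pkg (a₁ u₁ v₁ : E) (V₁ V₂ P₁ P₂ : Set E)
    (hV₁ : V₁ = {a₁, a₁ + u₁, a₁ + v₁, a₁ + u₁ + v₁})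
    (hP₁ : P₁ = convexHull ℝ V₁)
    (hfront : V₁ ∪ V₂ ⊆ frontier (convexHull ℝ (P₁ ∪ P₂)))
    (F G : E →ₗ[ℝ] ℝ) (hFu : F u₁ = 1) (hFv : F v₁ = 0)
    (hGu : G u₁ = 0) (hGv : G v₁ = 1)
    (hrep : ∀ x : E, x = F x • u₁ + G x • v₁)
    {w : E} (hw : w ∈ V₁ ∪ V₂) :
    ∃ α β : ℝ, (∀ x ∈ convexHull ℝ (P₁ ∪ P₂),
        F (x - a₁) * α + G (x - a₁) * β ≤ F (w - a₁) * α + G (w - a₁) * β) ∧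
      1/2 * α + 1/2 * β < F (w - a₁) * α + G (w - a₁) * β := by
  set K := convexHull ℝ (P₁ ∪ P₂) with hK
  have hKconv : Convex ℝ K := convex_convexHull ℝ _
  have hrep' : ∀ x : E, x = a₁ + F (x - a₁) • u₁ + G (x - a₁) • v₁ := by
    intro x
    have h := hrep (x - a₁)
    have : a₁ + F (x - a₁) • u₁ + G (x - a₁) • v₁ = a₁ + (F (x - a₁) • u₁ + G (x - a₁) • v₁) := by
      abel
    rw [this, ← h]
    abel
  have hFc : Continuous fun x : E => F (x - a₁) :=
    (LinearMap.continuous_of_finiteDimensional F).comp (continuous_id.sub continuous_const)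
  have hGc : Continuous fun x : E => G (x - a₁) :=
    (LinearMap.continuous_of_finiteDimensional G).comp (continuous_id.sub continuous_const)
  set U : Set E := ((fun x : E => F (x - a₁)) ⁻¹' Ioo 0 1) ∩
      ((fun x : E => G (x - a₁)) ⁻¹' Ioo 0 1) with hU
  have hUopen : IsOpen U := (isOpen_Ioo.preimage hFc).inter (isOpen_Ioo.preimage hGc)
  have hUK : U ⊆ K := by
    intro x hx
    obtain ⟨⟨hf0, hf1⟩, hg0, hg1⟩ := hx
    have hxP : x ∈ P₁ := by
      rw [hP₁, hV₁]
      exact mem_hull_box (le_of_lt hf0) (le_of_lt hf1) (le_of_lt hg0) (le_of_lt hg1) (hrep' x)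
    exact subset_convexHull ℝ _ (Or.inl hxP)
  set z : E := a₁ + (1/2 : ℝ) • u₁ + (1/2 : ℝ) • v₁ with hzdef
  have hzsub : z - a₁ = (1/2 : ℝ) • u₁ + (1/2 : ℝ) • v₁ := by rw [hzdef]; abel
  have hFz : F (z - a₁) = 1/2 := by rw [hzsub, map_add, map_smul, map_smul, hFu, hFv]; simp
  have hGz : G (z - a₁) = 1/2 := by rw [hzsub, map_add, map_smul, map_smul, hGu, hGv]; simp
  have hzU : z ∈ U := by
    constructor <;> simp only [mem_preimage, hFz, hGz] <;> norm_num
  have hzint : z ∈ interior K := interior_maximal hUK hUopen hzU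
  have hwni : w ∉ interior K := (hfront hw).2
  obtain ⟨f, hf, hfz⟩ := support_lemma hKconv hzint hwni
  set α := f u₁ with hα
  set β := f v₁ with hβ
  have feval : ∀ x : E, (f x : ℝ) = f a₁ + F (x - a₁) * α + G (x - a₁) * β := by
    intro x
    have h1 : (f x : ℝ) = f a₁ + f (x - a₁) := by
      rw [← map_add]; norm_num
    have h2 : x - a₁ = F (x - a₁) • u₁ + G (x - a₁) • v₁ := hrep (x - a₁)
    have h3 : (f (x - a₁) : ℝ) = F (x - a₁) * α + G (x - a₁) * β := by
      conv_lhs => rw [h2]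
      rw [map_add, map_smul, map_smul]
      simp [smul_eq_mul]
      rfl
    rw [h1, h3]
    ring
  refine ⟨α, β, fun x hx => ?_, ?_⟩
  · have := hf x hx
    rw [feval x, feval w] at this
    linarith
  · have := hfz
    rw [feval z, feval w, hFz, hGz] at this
    linarith



lemma det_step {α β sp tp sq tq : ℝ} (htp : 0 < tp) (htq : 0 < tq)
    (j1 : 0 ≤ sp * α + tp * β) (j2 : sq * α + tq * β ≤ 0) :
    0 ≤ α * (sp * tq - tp * sq) := by
  nlinarith [mul_nonneg j1 htq.le, mul_nonpos_of_nonpos_of_nonneg j2 htp.le]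

lemma det_final {α₁ α₂ sp tp sq tq : ℝ} (hα₁ : 0 < α₁) (hα₂ : 0 < α₂)
    (hD : sp * tq - tp * sq ≠ 0)
    (m1 : 0 ≤ α₁ * (sp * tq - tp * sq)) (m2 : 0 ≤ α₂ * (sq * tp - tq * sp)) :
    False := by
  rcases lt_or_gt_of_ne hD with h | h
  · nlinarith [mul_pos hα₁ (neg_pos.mpr h)]
  · nlinarith [mul_pos hα₂ h]


lemma nonpos_cancel {a c : ℝ} (hc : 0 < c) (h : a * c ≤ 0) : a ≤ 0 := by nlinarith
lemma nonneg_cancel {a c : ℝ} (hc : 0 < c) (h : 0 ≤ a * c) : 0 ≤ a := by nlinarith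

lemma corner11 {α β s t : ℝ} (hs : 1 < s) (ht : 1 < t) (h1 : α ≤ α + β)
    (h2 : β ≤ α + β) (hy : s*α + t*β ≤ α + β) (hstr : 1/2*α + 1/2*β < α + β) : False := by
  have hα : 0 ≤ α := by linarith
  have hβ : 0 ≤ β := by linarith
  rcases lt_or_ge 0 α with h | h
  · nlinarith [mul_pos (by linarith : (0:ℝ) < s - 1) h,
      mul_nonneg (by linarith : (0:ℝ) ≤ t - 1) hβ]
  · have hα0 : α = 0 := le_antisymm h hα
    have hβ0 : 0 < β := by rw [hα0] at hstr; linarith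
    nlinarith [mul_pos (by linarith : (0:ℝ) < t - 1) hβ0]

lemma corner00 {α β s t : ℝ} (hs : s < 0) (ht : t < 0) (h1 : α ≤ 0)
    (h2 : β ≤ 0) (hy : s*α + t*β ≤ 0) (hstr : 1/2*α + 1/2*β < 0) : False := by
  rcases lt_or_ge α 0 with h | h
  · nlinarith [mul_pos_of_neg_of_neg hs h,
      (by nlinarith : (0:ℝ) ≤ t * β)]
  · have hα0 : α = 0 := le_antisymm h1 h
    have hβ0 : β < 0 := by rw [hα0] at hstr; linarith
    nlinarith [mul_pos_of_neg_of_neg ht hβ0]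

lemma corner10 {α β s t : ℝ} (hs : 1 < s) (ht : t < 0) (h0 : 0 ≤ α)
    (h3 : α + β ≤ α) (hy : s*α + t*β ≤ α) (hstr : 1/2*α + 1/2*β < α) : False := by
  have hβ : β ≤ 0 := by linarith
  rcases lt_or_ge 0 α with h | h
  · nlinarith [mul_pos (by linarith : (0:ℝ) < s - 1) h,
      (by nlinarith : (0:ℝ) ≤ t * β)]
  · have hα0 : α = 0 := le_antisymm h h0
    have hβ0 : β < 0 := by rw [hα0] at hstr; linarith
    nlinarith [mul_pos_of_neg_of_neg ht hβ0]

section Core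
variable (a₁ u₁ v₁ a₂ u₂ v₂ : E)
variable (V₁ V₂ P₁ P₂ : Set E)

/-- the two middle vertices situation -/
lemma stmt_posneg
    (h₁ : LinearIndependent ℝ ![u₁, v₁]) (h₂ : LinearIndependent ℝ ![u₂, v₂])
    (hV₁ : V₁ = {a₁, a₁ + u₁, a₁ + v₁, a₁ + u₁ + v₁})
    (hV₂ : V₂ = {a₂, a₂ + u₂, a₂ + v₂, a₂ + u₂ + v₂})
    (hP₁ : P₁ = convexHull ℝ V₁) (hP₂ : P₂ = convexHull ℝ V₂)
    (hfront : V₁ ∪ V₂ ⊆ frontier (convexHull ℝ (P₁ ∪ P₂)))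
    (hslab : ∀ y ∈ P₂, ∀ g : E →ₗ[ℝ] ℝ, g u₁ = 0 → g v₁ = 1 →
      0 ≤ g (y - a₁) ∧ g (y - a₁) ≤ 1)
    (hside : ∀ y ∈ P₂, ∀ g : E →ₗ[ℝ] ℝ, g u₁ = 1 → g v₁ = 0 → 1 < g (y - a₁))
    (htp : ∀ g : E →ₗ[ℝ] ℝ, g u₁ = 0 → g v₁ = 1 → 0 < g u₂)
    (htq : ∀ g : E →ₗ[ℝ] ℝ, g u₁ = 0 → g v₁ = 1 → 0 < g v₂) : False := by
  obtain ⟨F, G, hFu, hFv, hGu, hGv, hrep⟩ := coordFG h₁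
  have hV₂P : V₂ ⊆ P₂ := by rw [hP₂]; exact subset_convexHull ℝ V₂
  have hm0 : a₂ ∈ P₂ := hV₂P (by rw [hV₂]; simp)
  have hm1 : a₂ + u₂ ∈ P₂ := hV₂P (by rw [hV₂]; simp)
  have hm2 : a₂ + v₂ ∈ P₂ := hV₂P (by rw [hV₂]; simp)
  have hm3 : a₂ + u₂ + v₂ ∈ P₂ := hV₂P (by rw [hV₂]; simp)
  set sb := F (a₂ - a₁) with hsb
  set tb := G (a₂ - a₁) with htb
  set sp := F u₂ with hsp
  set tp := G u₂ with htpd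
  set sq := F v₂ with hsq
  set tq := G v₂ with htqd
  have e1 : a₂ + u₂ - a₁ = (a₂ - a₁) + u₂ := by abel
  have e2 : a₂ + v₂ - a₁ = (a₂ - a₁) + v₂ := by abel
  have e3 : a₂ + u₂ + v₂ - a₁ = ((a₂ - a₁) + u₂) + v₂ := by abel
  have cF1 : F (a₂ + u₂ - a₁) = sb + sp := by rw [e1, map_add]
  have cG1 : G (a₂ + u₂ - a₁) = tb + tp := by rw [e1, map_add]
  have cF2 : F (a₂ + v₂ - a₁) = sb + sq := by rw [e2, map_add]
  have cG2 : G (a₂ + v₂ - a₁) = tb + tq := by rw [e2, map_add]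
  have cF3 : F (a₂ + u₂ + v₂ - a₁) = sb + sp + sq := by rw [e3, map_add, map_add]
  have cG3 : G (a₂ + u₂ + v₂ - a₁) = tb + tp + tq := by rw [e3, map_add, map_add]
  -- slab facts
  have s0 := hslab _ hm0 G hGu hGv
  rw [← htb] at s0
  have s3 := hslab _ hm3 G hGu hGv
  rw [cG3] at s3
  -- side facts
  have d1 := hside _ hm1 F hFu hFv
  have d2 := hside _ hm2 F hFu hFv
  rw [cF1] at d1
  rw [cF2] at d2
  have htp' : 0 < tp := htp G hGu hGv
  have htq' : 0 < tq := htq G hGu hGv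
  have hD : sp * tq - tp * sq ≠ 0 := li_det_ne h₂ (hrep u₂) (hrep v₂)
  -- V₁ membership in K
  set K := convexHull ℝ (P₁ ∪ P₂) with hK
  have hVK : ∀ x ∈ V₁ ∪ V₂, x ∈ K := by
    intro x hx
    rcases hx with hx | hx
    · exact subset_convexHull ℝ _ (Or.inl (by rw [hP₁]; exact subset_convexHull ℝ V₁ hx))
    · exact subset_convexHull ℝ _ (Or.inr (hV₂P hx))
  have hb0 : a₁ ∈ K := hVK _ (Or.inl (by rw [hV₁]; simp))
  have hb1 : a₁ + u₁ ∈ K := hVK _ (Or.inl (by rw [hV₁]; simp))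
  have hb2 : a₁ + v₁ ∈ K := hVK _ (Or.inl (by rw [hV₁]; simp))
  have hb3 : a₁ + u₁ + v₁ ∈ K := hVK _ (Or.inl (by rw [hV₁]; simp))
  have hc0 : a₂ ∈ K := hVK _ (Or.inr (by rw [hV₂]; simp))
  have hc3 : a₂ + u₂ + v₂ ∈ K := hVK _ (Or.inr (by rw [hV₂]; simp))
  -- coordinates of V₁ points
  have f0 : F (a₁ - a₁) = 0 := by rw [sub_self, map_zero]
  have g0 : G (a₁ - a₁) = 0 := by rw [sub_self, map_zero]
  have eu : a₁ + u₁ - a₁ = u₁ := by abel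
  have ev : a₁ + v₁ - a₁ = v₁ := by abel
  have euv : a₁ + u₁ + v₁ - a₁ = u₁ + v₁ := by abel
  have f1 : F (a₁ + u₁ - a₁) = 1 := by rw [eu, hFu]
  have g1 : G (a₁ + u₁ - a₁) = 0 := by rw [eu, hGu]
  have f2 : F (a₁ + v₁ - a₁) = 0 := by rw [ev, hFv]
  have g2 : G (a₁ + v₁ - a₁) = 1 := by rw [ev, hGv]
  have f3 : F (a₁ + u₁ + v₁ - a₁) = 1 := by rw [euv, map_add, hFu, hFv]; ring
  have g3 : G (a₁ + u₁ + v₁ - a₁) = 1 := by rw [euv, map_add, hGu, hGv]; ring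
  -- support at w₁ = a₂ + u₂
  have hw₁mem : a₂ + u₂ ∈ V₁ ∪ V₂ := Or.inr (by rw [hV₂]; simp)
  obtain ⟨α₁, β₁, hsup₁, hstr₁⟩ :=
    support_pkg a₁ u₁ v₁ V₁ V₂ P₁ P₂ hV₁ hP₁ hfront F G hFu hFv hGu hGv hrep hw₁mem
  rw [cF1, cG1] at hsup₁ hstr₁
  have i0 := hsup₁ _ hb0; rw [f0, g0] at i0
  have i1 := hsup₁ _ hb1; rw [f1, g1] at i1
  have i2 := hsup₁ _ hb2; rw [f2, g2] at i2
  have i3 := hsup₁ _ hb3; rw [f3, g3] at i3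
  have ia := hsup₁ _ hc0; rw [← hsb, ← htb] at ia
  have ic := hsup₁ _ hc3; rw [cF3, cG3] at ic
  have hα₁ : 0 < α₁ :=
    alpha_pos (α := α₁) (β := β₁) (s := sb + sp) (t := tb + tp) d1
      (by linarith [s0.1, htp']) (by linarith [s3.2, htq'])
      (by linarith) (by linarith) (by linarith) (by linarith) (by linarith)
  have j1 : 0 ≤ sp * α₁ + tp * β₁ := by linarith
  have j2 : sq * α₁ + tq * β₁ ≤ 0 := by linarith
  -- support at w₂ = a₂ + v₂
  have hw₂mem : a₂ + v₂ ∈ V₁ ∪ V₂ := Or.inr (by rw [hV₂]; simp)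
  obtain ⟨α₂, β₂, hsup₂, hstr₂⟩ :=
    support_pkg a₁ u₁ v₁ V₁ V₂ P₁ P₂ hV₁ hP₁ hfront F G hFu hFv hGu hGv hrep hw₂mem
  rw [cF2, cG2] at hsup₂ hstr₂
  have k0 := hsup₂ _ hb0; rw [f0, g0] at k0
  have k1 := hsup₂ _ hb1; rw [f1, g1] at k1
  have k2 := hsup₂ _ hb2; rw [f2, g2] at k2
  have k3 := hsup₂ _ hb3; rw [f3, g3] at k3
  have ka := hsup₂ _ hc0; rw [← hsb, ← htb] at ka
  have kc := hsup₂ _ hc3; rw [cF3, cG3] at kc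
  have hα₂ : 0 < α₂ :=
    alpha_pos (α := α₂) (β := β₂) (s := sb + sq) (t := tb + tq) d2
      (by linarith [s0.1, htq']) (by linarith [s3.2, htp'])
      (by linarith) (by linarith) (by linarith) (by linarith) (by linarith)
  have l1 : 0 ≤ sq * α₂ + tq * β₂ := by linarith
  have l2 : sp * α₂ + tp * β₂ ≤ 0 := by linarith
  -- combine
  have m1 : 0 ≤ α₁ * (sp * tq - tp * sq) := det_step htp' htq' j1 j2
  have m2 : 0 ≤ α₂ * (sq * tp - tq * sp) := det_step htq' htp' l1 l2
  exact det_final hα₁ hα₂ hD m1 m2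

/-- the case where u₂ is parallel to u₁ (tp = 0): conclusion holds -/
lemma stmt_core
    (h₁ : LinearIndependent ℝ ![u₁, v₁]) (h₂ : LinearIndependent ℝ ![u₂, v₂])
    (hV₁ : V₁ = {a₁, a₁ + u₁, a₁ + v₁, a₁ + u₁ + v₁})
    (hV₂ : V₂ = {a₂, a₂ + u₂, a₂ + v₂, a₂ + u₂ + v₂})
    (hP₁ : P₁ = convexHull ℝ V₁) (hP₂ : P₂ = convexHull ℝ V₂)
    (hfront : V₁ ∪ V₂ ⊆ frontier (convexHull ℝ (P₁ ∪ P₂)))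
    (hslab : ∀ y ∈ P₂, ∀ g : E →ₗ[ℝ] ℝ, g u₁ = 0 → g v₁ = 1 →
      0 ≤ g (y - a₁) ∧ g (y - a₁) ≤ 1)
    (hside : ∀ y ∈ P₂, ∀ g : E →ₗ[ℝ] ℝ, g u₁ = 1 → g v₁ = 0 → 1 < g (y - a₁))
    (htp0 : ∀ g : E →ₗ[ℝ] ℝ, g u₁ = 0 → g v₁ = 1 → g u₂ = 0) :
    ∃ (p₁ p₂ w : E), w ≠ 0 ∧
      {x | ∃ t : ℝ, x = p₁ + t • w} ≠ {x | ∃ t : ℝ, x = p₂ + t • w} ∧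
      V₁ ∪ V₂ ⊆ {x | ∃ t : ℝ, x = p₁ + t • w} ∪ {x | ∃ t : ℝ, x = p₂ + t • w} := by
  obtain ⟨F, G, hFu, hFv, hGu, hGv, hrep⟩ := coordFG h₁
  have hrep' : ∀ x : E, x = a₁ + F (x - a₁) • u₁ + G (x - a₁) • v₁ := by
    intro x
    have h := hrep (x - a₁)
    have h2 : a₁ + F (x - a₁) • u₁ + G (x - a₁) • v₁
        = a₁ + (F (x - a₁) • u₁ + G (x - a₁) • v₁) := by abel
    rw [h2, ← h]; abel
  have hV₂P : V₂ ⊆ P₂ := by rw [hP₂]; exact subset_convexHull ℝ V₂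
  have hm0 : a₂ ∈ P₂ := hV₂P (by rw [hV₂]; simp)
  have hm1 : a₂ + u₂ ∈ P₂ := hV₂P (by rw [hV₂]; simp)
  have hm2 : a₂ + v₂ ∈ P₂ := hV₂P (by rw [hV₂]; simp)
  have hm3 : a₂ + u₂ + v₂ ∈ P₂ := hV₂P (by rw [hV₂]; simp)
  set sb := F (a₂ - a₁) with hsb
  set tb := G (a₂ - a₁) with htb
  set sp := F u₂ with hsp
  set sq := F v₂ with hsq
  set tq := G v₂ with htqd
  have htp' : G u₂ = 0 := htp0 G hGu hGv
  have e1 : a₂ + u₂ - a₁ = a₂ - a₁ + u₂ := by abel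
  have e2 : a₂ + v₂ - a₁ = a₂ - a₁ + v₂ := by abel
  have e3 : a₂ + u₂ + v₂ - a₁ = a₂ - a₁ + u₂ + v₂ := by abel
  have cF1 : F (a₂ + u₂ - a₁) = sb + sp := by rw [e1, map_add]
  have cG1 : G (a₂ + u₂ - a₁) = tb := by rw [e1, map_add, htp', add_zero]
  have cF2 : F (a₂ + v₂ - a₁) = sb + sq := by rw [e2, map_add]
  have cG2 : G (a₂ + v₂ - a₁) = tb + tq := by rw [e2, map_add]
  have cF3 : F (a₂ + u₂ + v₂ - a₁) = sb + sp + sq := by rw [e3, map_add, map_add]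
  have cG3 : G (a₂ + u₂ + v₂ - a₁) = tb + tq := by
    rw [e3, map_add, map_add, htp', add_zero]
  have s0 := hslab _ hm0 G hGu hGv
  rw [← htb] at s0
  have s2 := hslab _ hm2 G hGu hGv
  rw [cG2] at s2
  have d0 := hside _ hm0 F hFu hFv
  rw [← hsb] at d0
  have d1 := hside _ hm1 F hFu hFv
  rw [cF1] at d1
  have d2 := hside _ hm2 F hFu hFv
  rw [cF2] at d2
  have d3 := hside _ hm3 F hFu hFv
  rw [cF3] at d3
  have hD : sp * tq - G u₂ * sq ≠ 0 := li_det_ne h₂ (hrep u₂) (hrep v₂)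
  rw [htp', zero_mul, sub_zero] at hD
  have hsp0 : sp ≠ 0 := fun h => hD (by rw [h, zero_mul])
  set K := convexHull ℝ (P₁ ∪ P₂) with hK
  have hVK : ∀ x ∈ V₁ ∪ V₂, x ∈ K := by
    intro x hx
    rcases hx with hx | hx
    · exact subset_convexHull ℝ _ (Or.inl (by rw [hP₁]; exact subset_convexHull ℝ V₁ hx))
    · exact subset_convexHull ℝ _ (Or.inr (hV₂P hx))
  have hb0 : a₁ ∈ K := hVK _ (Or.inl (by rw [hV₁]; simp))
  have hb1 : a₁ + u₁ ∈ K := hVK _ (Or.inl (by rw [hV₁]; simp))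
  have hb2 : a₁ + v₁ ∈ K := hVK _ (Or.inl (by rw [hV₁]; simp))
  have hb3 : a₁ + u₁ + v₁ ∈ K := hVK _ (Or.inl (by rw [hV₁]; simp))
  have hc0 : a₂ ∈ K := hVK _ (Or.inr (by rw [hV₂]; simp))
  have hc1 : a₂ + u₂ ∈ K := hVK _ (Or.inr (by rw [hV₂]; simp))
  have hc2 : a₂ + v₂ ∈ K := hVK _ (Or.inr (by rw [hV₂]; simp))
  have hc3 : a₂ + u₂ + v₂ ∈ K := hVK _ (Or.inr (by rw [hV₂]; simp))
  have f0 : F (a₁ - a₁) = 0 := by rw [sub_self, map_zero]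
  have g0 : G (a₁ - a₁) = 0 := by rw [sub_self, map_zero]
  have eu : a₁ + u₁ - a₁ = u₁ := by abel
  have ev : a₁ + v₁ - a₁ = v₁ := by abel
  have euv : a₁ + u₁ + v₁ - a₁ = u₁ + v₁ := by abel
  have f1 : F (a₁ + u₁ - a₁) = 1 := by rw [eu, hFu]
  have g1 : G (a₁ + u₁ - a₁) = 0 := by rw [eu, hGu]
  have f2 : F (a₁ + v₁ - a₁) = 0 := by rw [ev, hFv]
  have g2 : G (a₁ + v₁ - a₁) = 1 := by rw [ev, hGv]
  have f3 : F (a₁ + u₁ + v₁ - a₁) = 1 := by rw [euv, map_add, hFu, hFv]; ring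
  have g3 : G (a₁ + u₁ + v₁ - a₁) = 1 := by rw [euv, map_add, hGu, hGv]; ring
  -- first pair: a₂ and a₂ + u₂, both at height tb
  have tbmem : tb = 0 ∨ tb = 1 := by
    by_contra hcon
    push_neg at hcon
    have htb0 : 0 < tb := lt_of_le_of_ne s0.1 (Ne.symm hcon.1)
    have htb1 : tb < 1 := lt_of_le_of_ne s0.2 hcon.2
    -- support at a₂
    obtain ⟨α₁, β₁, hsup₁, hstr₁⟩ :=
      support_pkg a₁ u₁ v₁ V₁ V₂ P₁ P₂ hV₁ hP₁ hfront F G hFu hFv hGu hGv hrep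
        (Or.inr (by rw [hV₂]; simp) : a₂ ∈ V₁ ∪ V₂)
    rw [← hsb, ← htb] at hsup₁ hstr₁
    have i0 := hsup₁ _ hb0; rw [f0, g0] at i0
    have i1 := hsup₁ _ hb1; rw [f1, g1] at i1
    have i2 := hsup₁ _ hb2; rw [f2, g2] at i2
    have i3 := hsup₁ _ hb3; rw [f3, g3] at i3
    have i4 := hsup₁ _ hc1; rw [cF1, cG1] at i4
    have hα₁ : 0 < α₁ :=
      alpha_pos (α := α₁) (β := β₁) (s := sb) (t := tb) d0 htb0 htb1
        (by linarith) (by linarith) (by linarith) (by linarith) (by linarith)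
    have hsp_le : sp ≤ 0 := nonpos_cancel hα₁ (by linarith)
    -- support at a₂ + u₂
    obtain ⟨α₂, β₂, hsup₂, hstr₂⟩ :=
      support_pkg a₁ u₁ v₁ V₁ V₂ P₁ P₂ hV₁ hP₁ hfront F G hFu hFv hGu hGv hrep
        (Or.inr (by rw [hV₂]; simp) : a₂ + u₂ ∈ V₁ ∪ V₂)
    rw [cF1, cG1] at hsup₂ hstr₂
    have k0 := hsup₂ _ hb0; rw [f0, g0] at k0
    have k1 := hsup₂ _ hb1; rw [f1, g1] at k1
    have k2 := hsup₂ _ hb2; rw [f2, g2] at k2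
    have k3 := hsup₂ _ hb3; rw [f3, g3] at k3
    have k4 := hsup₂ _ hc0; rw [← hsb, ← htb] at k4
    have hα₂ : 0 < α₂ :=
      alpha_pos (α := α₂) (β := β₂) (s := sb + sp) (t := tb) d1 htb0 htb1
        (by linarith) (by linarith) (by linarith) (by linarith) (by linarith)
    have hsp_ge : 0 ≤ sp := nonneg_cancel hα₂ (by linarith)
    exact hsp0 (le_antisymm hsp_le hsp_ge)
  -- second pair: a₂ + v₂ and a₂ + u₂ + v₂, both at height tb + tq
  have tcmem : tb + tq = 0 ∨ tb + tq = 1 := by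
    by_contra hcon
    push_neg at hcon
    have htc0 : 0 < tb + tq := lt_of_le_of_ne s2.1 (Ne.symm hcon.1)
    have htc1 : tb + tq < 1 := lt_of_le_of_ne s2.2 hcon.2
    obtain ⟨α₁, β₁, hsup₁, hstr₁⟩ :=
      support_pkg a₁ u₁ v₁ V₁ V₂ P₁ P₂ hV₁ hP₁ hfront F G hFu hFv hGu hGv hrep
        (Or.inr (by rw [hV₂]; simp) : a₂ + v₂ ∈ V₁ ∪ V₂)
    rw [cF2, cG2] at hsup₁ hstr₁
    have i0 := hsup₁ _ hb0; rw [f0, g0] at i0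
    have i1 := hsup₁ _ hb1; rw [f1, g1] at i1
    have i2 := hsup₁ _ hb2; rw [f2, g2] at i2
    have i3 := hsup₁ _ hb3; rw [f3, g3] at i3
    have i4 := hsup₁ _ hc3; rw [cF3, cG3] at i4
    have hα₁ : 0 < α₁ :=
      alpha_pos (α := α₁) (β := β₁) (s := sb + sq) (t := tb + tq) d2 htc0 htc1
        (by linarith) (by linarith) (by linarith) (by linarith) (by linarith)
    have hsp_le : sp ≤ 0 := nonpos_cancel hα₁ (by linarith)
    obtain ⟨α₂, β₂, hsup₂, hstr₂⟩ :=
      support_pkg a₁ u₁ v₁ V₁ V₂ P₁ P₂ hV₁ hP₁ hfront F G hFu hFv hGu hGv hrep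
        (Or.inr (by rw [hV₂]; simp) : a₂ + u₂ + v₂ ∈ V₁ ∪ V₂)
    rw [cF3, cG3] at hsup₂ hstr₂
    have k0 := hsup₂ _ hb0; rw [f0, g0] at k0
    have k1 := hsup₂ _ hb1; rw [f1, g1] at k1
    have k2 := hsup₂ _ hb2; rw [f2, g2] at k2
    have k3 := hsup₂ _ hb3; rw [f3, g3] at k3
    have k4 := hsup₂ _ hc2; rw [cF2, cG2] at k4
    have hα₂ : 0 < α₂ :=
      alpha_pos (α := α₂) (β := β₂) (s := sb + sp + sq) (t := tb + tq) d3 htc0 htc1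
        (by linarith) (by linarith) (by linarith) (by linarith) (by linarith)
    have hsp_ge : 0 ≤ sp := nonneg_cancel hα₂ (by linarith)
    exact hsp0 (le_antisymm hsp_le hsp_ge)
  -- now build the two lines
  refine ⟨a₁, a₁ + v₁, u₁, li_ne_zero_left h₁, ?_, ?_⟩
  · intro heq
    have hmem : a₁ + v₁ ∈ {x : E | ∃ t : ℝ, x = a₁ + v₁ + t • u₁} :=
      ⟨0, by rw [zero_smul, add_zero]⟩
    rw [← heq] at hmem
    obtain ⟨t, ht⟩ := hmem
    apply li_not_smul h₁ t
    have : v₁ = t • u₁ := by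
      have h' : a₁ + v₁ - a₁ = a₁ + t • u₁ - a₁ := by rw [← ht]
      rw [ev] at h'
      rw [h']; abel
    exact this.symm
  · intro x hx
    have hτ : G (x - a₁) = 0 ∨ G (x - a₁) = 1 := by
      rcases hx with hx | hx
      · rw [hV₁] at hx
        rcases hx with rfl | rfl | rfl | rfl
        · left; exact g0
        · left; exact g1
        · right; exact g2
        · right; exact g3
      · rw [hV₂] at hx
        rcases hx with rfl | rfl | rfl | rfl
        · rcases tbmem with h | h
          · left; rw [← htb]; exact h
          · right; rw [← htb]; exact h
        · rcases tbmem with h | h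
          · left; rw [cG1]; exact h
          · right; rw [cG1]; exact h
        · rcases tcmem with h | h
          · left; rw [cG2]; exact h
          · right; rw [cG2]; exact h
        · rcases tcmem with h | h
          · left; rw [cG3]; exact h
          · right; rw [cG3]; exact h
    rcases hτ with h | h
    · left
      refine ⟨F (x - a₁), ?_⟩
      conv_lhs => rw [hrep' x]
      rw [h, zero_smul, add_zero]
    · right
      refine ⟨F (x - a₁), ?_⟩
      conv_lhs => rw [hrep' x]
      rw [h, one_smul]
      abel

lemma stmt_sides
    (h₁ : LinearIndependent ℝ ![u₁, v₁]) (h₂ : LinearIndependent ℝ ![u₂, v₂])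
    (hV₁ : V₁ = {a₁, a₁ + u₁, a₁ + v₁, a₁ + u₁ + v₁})
    (hV₂ : V₂ = {a₂, a₂ + u₂, a₂ + v₂, a₂ + u₂ + v₂})
    (hP₁ : P₁ = convexHull ℝ V₁) (hP₂ : P₂ = convexHull ℝ V₂)
    (hfront : V₁ ∪ V₂ ⊆ frontier (convexHull ℝ (P₁ ∪ P₂)))
    (hslab : ∀ y ∈ P₂, ∀ g : E →ₗ[ℝ] ℝ, g u₁ = 0 → g v₁ = 1 →
      0 ≤ g (y - a₁) ∧ g (y - a₁) ≤ 1)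
    (hside : ∀ y ∈ P₂, ∀ g : E →ₗ[ℝ] ℝ, g u₁ = 1 → g v₁ = 0 → 1 < g (y - a₁)) :
    ∃ (p₁ p₂ w : E), w ≠ 0 ∧
      {x | ∃ t : ℝ, x = p₁ + t • w} ≠ {x | ∃ t : ℝ, x = p₂ + t • w} ∧
      V₁ ∪ V₂ ⊆ {x | ∃ t : ℝ, x = p₁ + t • w} ∪ {x | ∃ t : ℝ, x = p₂ + t • w} := by
  obtain ⟨F, G, hFu, hFv, hGu, hGv, hrep⟩ := coordFG h₁
  have gtrans : ∀ g : E →ₗ[ℝ] ℝ, g u₁ = 0 → g v₁ = 1 → ∀ x : E, g x = G x := by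
    intro g hg0 hg1 x
    conv_lhs => rw [hrep x]
    rw [map_add, map_smul, map_smul, hg0, hg1]
    have : G (F x • u₁ + G x • v₁) = G x := by
      rw [map_add, map_smul, map_smul, hGu, hGv]
      simp
    rw [← hrep x] at this
    rw [this]
    simp
  rcases eq_or_ne (G u₂) 0 with htp | htp
  · exact stmt_core a₁ u₁ v₁ a₂ u₂ v₂ V₁ V₂ P₁ P₂ h₁ h₂ hV₁ hV₂ hP₁ hP₂ hfront hslab hside
      (fun g hg0 hg1 => by rw [gtrans g hg0 hg1, htp])
  rcases eq_or_ne (G v₂) 0 with htq | htq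
  · have hV₂' : V₂ = {a₂, a₂ + v₂, a₂ + u₂, a₂ + v₂ + u₂} := by
      have e : a₂ + v₂ + u₂ = a₂ + u₂ + v₂ := by abel
      rw [e, hV₂]
      ext x
      simp only [mem_insert_iff, mem_singleton_iff]
      tauto
    exact stmt_core a₁ u₁ v₁ a₂ v₂ u₂ V₁ V₂ P₁ P₂ h₁ (li_swap h₂) hV₁ hV₂' hP₁ hP₂ hfront
      hslab hside (fun g hg0 hg1 => by rw [gtrans g hg0 hg1, htq])
  exfalso
  rcases lt_or_gt_of_ne htp with htp' | htp' <;> rcases lt_or_gt_of_ne htq with htq' | htq'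
  · -- tp < 0, tq < 0 : base a₂+u₂+v₂, dirs -u₂, -v₂
    have e1 : a₂ + u₂ + v₂ + -u₂ = a₂ + v₂ := by abel
    have e2 : a₂ + u₂ + v₂ + -v₂ = a₂ + u₂ := by abel
    have e3 : a₂ + u₂ + v₂ + -u₂ + -v₂ = a₂ := by abel
    have hV₂' : V₂ = {a₂ + u₂ + v₂, a₂ + u₂ + v₂ + -u₂, a₂ + u₂ + v₂ + -v₂,
        a₂ + u₂ + v₂ + -u₂ + -v₂} := by
      rw [e3, e1, e2, hV₂]
      ext x
      simp only [mem_insert_iff, mem_singleton_iff]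
      tauto
    exact stmt_posneg a₁ u₁ v₁ (a₂ + u₂ + v₂) (-u₂) (-v₂) V₁ V₂ P₁ P₂ h₁
      (li_negv (li_negu h₂)) hV₁ hV₂' hP₁ hP₂ hfront hslab hside
      (fun g hg0 hg1 => by rw [map_neg, gtrans g hg0 hg1]; linarith)
      (fun g hg0 hg1 => by rw [map_neg, gtrans g hg0 hg1]; linarith)
  · -- tp < 0, tq > 0 : base a₂+u₂, dirs -u₂, v₂
    have e1 : a₂ + u₂ + -u₂ = a₂ := by abel
    have e2 : a₂ + u₂ + -u₂ + v₂ = a₂ + v₂ := by abel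
    have hV₂' : V₂ = {a₂ + u₂, a₂ + u₂ + -u₂, a₂ + u₂ + v₂, a₂ + u₂ + -u₂ + v₂} := by
      rw [e2, e1, hV₂]
      ext x
      simp only [mem_insert_iff, mem_singleton_iff]
      tauto
    exact stmt_posneg a₁ u₁ v₁ (a₂ + u₂) (-u₂) v₂ V₁ V₂ P₁ P₂ h₁
      (li_negu h₂) hV₁ hV₂' hP₁ hP₂ hfront hslab hside
      (fun g hg0 hg1 => by rw [map_neg, gtrans g hg0 hg1]; linarith)
      (fun g hg0 hg1 => by rw [gtrans g hg0 hg1]; linarith)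
  · -- tp > 0, tq < 0 : base a₂+v₂, dirs u₂, -v₂
    have e1 : a₂ + v₂ + u₂ = a₂ + u₂ + v₂ := by abel
    have e2 : a₂ + v₂ + -v₂ = a₂ := by abel
    have e3 : a₂ + v₂ + u₂ + -v₂ = a₂ + u₂ := by abel
    have hV₂' : V₂ = {a₂ + v₂, a₂ + v₂ + u₂, a₂ + v₂ + -v₂, a₂ + v₂ + u₂ + -v₂} := by
      rw [e3, e1, e2, hV₂]
      ext x
      simp only [mem_insert_iff, mem_singleton_iff]
      tauto
    exact stmt_posneg a₁ u₁ v₁ (a₂ + v₂) u₂ (-v₂) V₁ V₂ P₁ P₂ h₁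
      (li_negv h₂) hV₁ hV₂' hP₁ hP₂ hfront hslab hside
      (fun g hg0 hg1 => by rw [gtrans g hg0 hg1]; linarith)
      (fun g hg0 hg1 => by rw [map_neg, gtrans g hg0 hg1]; linarith)
  · exact stmt_posneg a₁ u₁ v₁ a₂ u₂ v₂ V₁ V₂ P₁ P₂ h₁ h₂ hV₁ hV₂ hP₁ hP₂ hfront hslab hside
      (fun g hg0 hg1 => by rw [gtrans g hg0 hg1]; linarith)
      (fun g hg0 hg1 => by rw [gtrans g hg0 hg1]; linarith)

lemma stmt_slab
    (h₁ : LinearIndependent ℝ ![u₁, v₁]) (h₂ : LinearIndependent ℝ ![u₂, v₂])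
    (hV₁ : V₁ = {a₁, a₁ + u₁, a₁ + v₁, a₁ + u₁ + v₁})
    (hV₂ : V₂ = {a₂, a₂ + u₂, a₂ + v₂, a₂ + u₂ + v₂})
    (hP₁ : P₁ = convexHull ℝ V₁) (hP₂ : P₂ = convexHull ℝ V₂)
    (hfront : V₁ ∪ V₂ ⊆ frontier (convexHull ℝ (P₁ ∪ P₂)))
    (hdisj : P₁ ∩ P₂ = ∅)
    (hslab : ∀ y ∈ P₂, ∀ g : E →ₗ[ℝ] ℝ, g u₁ = 0 → g v₁ = 1 →
      0 ≤ g (y - a₁) ∧ g (y - a₁) ≤ 1) :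
    ∃ (p₁ p₂ w : E), w ≠ 0 ∧
      {x | ∃ t : ℝ, x = p₁ + t • w} ≠ {x | ∃ t : ℝ, x = p₂ + t • w} ∧
      V₁ ∪ V₂ ⊆ {x | ∃ t : ℝ, x = p₁ + t • w} ∪ {x | ∃ t : ℝ, x = p₂ + t • w} := by
  obtain ⟨F, G, hFu, hFv, hGu, hGv, hrep⟩ := coordFG h₁
  have ftrans : ∀ g : E →ₗ[ℝ] ℝ, ∀ x : E, g x = F x * g u₁ + G x * g v₁ := by
    intro g x
    conv_lhs => rw [hrep x]
    rw [map_add, map_smul, map_smul]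
    simp [smul_eq_mul]
  have hrep' : ∀ x : E, x = a₁ + F (x - a₁) • u₁ + G (x - a₁) • v₁ := by
    intro x
    have h := hrep (x - a₁)
    have h2 : a₁ + F (x - a₁) • u₁ + G (x - a₁) • v₁
        = a₁ + (F (x - a₁) • u₁ + G (x - a₁) • v₁) := by abel
    rw [h2, ← h]; abel
  -- not in the box
  have hout : ∀ y ∈ P₂, F (y - a₁) < 0 ∨ 1 < F (y - a₁) := by
    intro y hy
    by_contra hcon
    push_neg at hcon
    obtain ⟨hf0, hf1⟩ := hcon
    have hg := hslab y hy G hGu hGv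
    have hyP₁ : y ∈ P₁ := by
      rw [hP₁, hV₁]
      exact mem_hull_box hf0 hf1 hg.1 hg.2 (hrep' y)
    exact absurd (Set.mem_inter hyP₁ hy) (by rw [hdisj]; exact notMem_empty y)
  -- connectivity: all on one side
  have hpc : IsPreconnected P₂ := by
    rw [hP₂]; exact (convex_convexHull ℝ V₂).isPreconnected
  have hFc : Continuous fun x : E => F (x - a₁) :=
    (LinearMap.continuous_of_finiteDimensional F).comp (continuous_id.sub continuous_const)
  set A : Set E := (fun x : E => F (x - a₁)) ⁻¹' Iio 0 with hA
  set B : Set E := (fun x : E => F (x - a₁)) ⁻¹' Ioi 1 with hB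
  have hside2 : (∀ y ∈ P₂, 1 < F (y - a₁)) ∨ (∀ y ∈ P₂, F (y - a₁) < 0) := by
    by_contra hcon
    push_neg at hcon
    obtain ⟨⟨y₁, hy₁, hy₁'⟩, ⟨y₂, hy₂, hy₂'⟩⟩ := hcon
    have hne₁ : (P₂ ∩ A).Nonempty := ⟨y₁, hy₁, by
      simp only [hA, mem_preimage, mem_Iio]
      rcases hout y₁ hy₁ with h | h
      · exact h
      · exact absurd h (not_lt.mpr hy₁')⟩
    have hne₂ : (P₂ ∩ B).Nonempty := ⟨y₂, hy₂, by
      simp only [hB, mem_preimage, mem_Ioi]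
      rcases hout y₂ hy₂ with h | h
      · exact absurd h (not_lt.mpr hy₂')
      · exact h⟩
    obtain ⟨z, hzP, hzA, hzB⟩ := hpc A B (isOpen_Iio.preimage hFc) (isOpen_Ioi.preimage hFc)
      (fun y hy => by
        rcases hout y hy with h | h
        · exact Or.inl h
        · exact Or.inr h) hne₁ hne₂
    simp only [hA, hB, mem_preimage, mem_Iio, mem_Ioi] at hzA hzB
    linarith
  rcases hside2 with hbig | hsmall
  · exact stmt_sides a₁ u₁ v₁ a₂ u₂ v₂ V₁ V₂ P₁ P₂ h₁ h₂ hV₁ hV₂ hP₁ hP₂ hfront hslab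
      (fun y hy g hg1 hg0 => by
        rw [ftrans g (y - a₁), hg1, hg0, mul_one, mul_zero, add_zero]
        exact hbig y hy)
  · -- flip u₁
    have e1 : a₁ + u₁ + -u₁ = a₁ := by abel
    have e2 : a₁ + u₁ + -u₁ + v₁ = a₁ + v₁ := by abel
    have hV₁' : V₁ = {a₁ + u₁, a₁ + u₁ + -u₁, a₁ + u₁ + v₁, a₁ + u₁ + -u₁ + v₁} := by
      rw [e2, e1, hV₁]
      ext x
      simp only [mem_insert_iff, mem_singleton_iff]
      tauto
    have esub : ∀ y : E, y - (a₁ + u₁) = (y - a₁) - u₁ := fun y => by abel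
    exact stmt_sides (a₁ + u₁) (-u₁) v₁ a₂ u₂ v₂ V₁ V₂ P₁ P₂ (li_negu h₁) h₂ hV₁' hV₂
      hP₁ hP₂ hfront
      (fun y hy g hg0 hg1 => by
        rw [map_neg, neg_eq_zero] at hg0
        rw [esub y, map_sub, hg0, sub_zero]
        exact hslab y hy g hg0 hg1)
      (fun y hy g hg1 hg0 => by
        rw [map_neg] at hg1
        have hgu : g u₁ = -1 := by linarith [hg1]
        rw [esub y, map_sub, hgu, ftrans g (y - a₁), hgu, hg0, mul_zero, add_zero]
        have := hsmall y hy
        nlinarith [this])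

end Core
end Stmt9Aux

open Stmt9Aux in
/-- Two disjoint parallelograms in the plane all of whose vertices lie on the boundary of
their common convex hull have all their vertices contained in a pair of distinct
parallel lines. -/
theorem stmt_9 (a₁ u₁ v₁ a₂ u₂ v₂ : Fin 2 → ℝ)
    (h₁ : LinearIndependent ℝ ![u₁, v₁]) (h₂ : LinearIndependent ℝ ![u₂, v₂])
    (V₁ V₂ P₁ P₂ : Set (Fin 2 → ℝ))
    (hV₁ : V₁ = {a₁, a₁ + u₁, a₁ + v₁, a₁ + u₁ + v₁})
    (hV₂ : V₂ = {a₂, a₂ + u₂, a₂ + v₂, a₂ + u₂ + v₂})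
    (hP₁ : P₁ = convexHull ℝ V₁) (hP₂ : P₂ = convexHull ℝ V₂)
    (hfront : V₁ ∪ V₂ ⊆ frontier (convexHull ℝ (P₁ ∪ P₂)))
    (hdisj : P₁ ∩ P₂ = ∅) :
    ∃ (p₁ p₂ w : Fin 2 → ℝ), w ≠ 0 ∧
      {x | ∃ t : ℝ, x = p₁ + t • w} ≠ {x | ∃ t : ℝ, x = p₂ + t • w} ∧
      V₁ ∪ V₂ ⊆ {x | ∃ t : ℝ, x = p₁ + t • w} ∪ {x | ∃ t : ℝ, x = p₂ + t • w} := by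
  obtain ⟨F, G, hFu, hFv, hGu, hGv, hrep⟩ := coordFG h₁
  have ftrans : ∀ g : E →ₗ[ℝ] ℝ, ∀ x : E, g x = F x * g u₁ + G x * g v₁ := by
    intro g x
    conv_lhs => rw [hrep x]
    rw [map_add, map_smul, map_smul]
    simp [smul_eq_mul]
  have hrep' : ∀ x : E, x = a₁ + F (x - a₁) • u₁ + G (x - a₁) • v₁ := by
    intro x
    have h := hrep (x - a₁)
    have h2 : a₁ + F (x - a₁) • u₁ + G (x - a₁) • v₁
        = a₁ + (F (x - a₁) • u₁ + G (x - a₁) • v₁) := by abel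
    rw [h2, ← h]; abel
  set K := convexHull ℝ (P₁ ∪ P₂) with hK
  have hyK : ∀ y ∈ P₂, y ∈ K := fun y hy => subset_convexHull ℝ _ (Or.inr hy)
  have hb0 : a₁ ∈ K := subset_convexHull ℝ _
    (Or.inl (by rw [hP₁]; exact subset_convexHull ℝ V₁ (by rw [hV₁]; simp)))
  have hb1 : a₁ + u₁ ∈ K := subset_convexHull ℝ _
    (Or.inl (by rw [hP₁]; exact subset_convexHull ℝ V₁ (by rw [hV₁]; simp)))
  have hb2 : a₁ + v₁ ∈ K := subset_convexHull ℝ _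
    (Or.inl (by rw [hP₁]; exact subset_convexHull ℝ V₁ (by rw [hV₁]; simp)))
  have hb3 : a₁ + u₁ + v₁ ∈ K := subset_convexHull ℝ _
    (Or.inl (by rw [hP₁]; exact subset_convexHull ℝ V₁ (by rw [hV₁]; simp)))
  have f0 : F (a₁ - a₁) = 0 := by rw [sub_self, map_zero]
  have g0 : G (a₁ - a₁) = 0 := by rw [sub_self, map_zero]
  have eu : a₁ + u₁ - a₁ = u₁ := by abel
  have ev : a₁ + v₁ - a₁ = v₁ := by abel
  have euv : a₁ + u₁ + v₁ - a₁ = u₁ + v₁ := by abel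
  have f1 : F (a₁ + u₁ - a₁) = 1 := by rw [eu, hFu]
  have g1 : G (a₁ + u₁ - a₁) = 0 := by rw [eu, hGu]
  have f2 : F (a₁ + v₁ - a₁) = 0 := by rw [ev, hFv]
  have g2 : G (a₁ + v₁ - a₁) = 1 := by rw [ev, hGv]
  have f3 : F (a₁ + u₁ + v₁ - a₁) = 1 := by rw [euv, map_add, hFu, hFv]; ring
  have g3 : G (a₁ + u₁ + v₁ - a₁) = 1 := by rw [euv, map_add, hGu, hGv]; ring
  -- the corner lemma
  have hcorner : ∀ y ∈ P₂, (0 ≤ F (y - a₁) ∧ F (y - a₁) ≤ 1) ∨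
      (0 ≤ G (y - a₁) ∧ G (y - a₁) ≤ 1) := by
    intro y hy
    by_contra hcon
    push_neg at hcon
    have hF : F (y - a₁) < 0 ∨ 1 < F (y - a₁) := by
      rcases lt_or_ge (F (y - a₁)) 0 with h | h
      · exact Or.inl h
      · exact Or.inr (lt_of_not_ge fun hh => absurd (hcon.1 h) (not_lt.mpr hh))
    have hG : G (y - a₁) < 0 ∨ 1 < G (y - a₁) := by
      rcases lt_or_ge (G (y - a₁)) 0 with h | h
      · exact Or.inl h
      · exact Or.inr (lt_of_not_ge fun hh => absurd (hcon.2 h) (not_lt.mpr hh))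
    rcases hF with hF | hF <;> rcases hG with hG | hG
    · -- corner at a₁
      obtain ⟨α, β, hsup, hstr⟩ :=
        support_pkg a₁ u₁ v₁ V₁ V₂ P₁ P₂ hV₁ hP₁ hfront F G hFu hFv hGu hGv hrep
          (Or.inl (by rw [hV₁]; simp) : a₁ ∈ V₁ ∪ V₂)
      rw [f0, g0] at hsup hstr
      have i1 := hsup _ hb1; rw [f1, g1] at i1
      have i2 := hsup _ hb2; rw [f2, g2] at i2
      have iy := hsup _ (hyK y hy)
      exact corner00 (α := α) (β := β) (s := F (y - a₁)) (t := G (y - a₁)) hF hG (by linarith) (by linarith) (by linarith) (by linarith)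
    · -- corner at a₁ + v₁
      obtain ⟨α, β, hsup, hstr⟩ :=
        support_pkg a₁ u₁ v₁ V₁ V₂ P₁ P₂ hV₁ hP₁ hfront F G hFu hFv hGu hGv hrep
          (Or.inl (by rw [hV₁]; simp) : a₁ + v₁ ∈ V₁ ∪ V₂)
      rw [f2, g2] at hsup hstr
      have i0 := hsup _ hb0; rw [f0, g0] at i0
      have i3 := hsup _ hb3; rw [f3, g3] at i3
      have iy := hsup _ (hyK y hy)
      exact corner10 (α := β) (β := α) (s := G (y - a₁)) (t := F (y - a₁)) hG hF
        (by linarith) (by linarith) (by linarith) (by linarith)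
    · -- corner at a₁ + u₁
      obtain ⟨α, β, hsup, hstr⟩ :=
        support_pkg a₁ u₁ v₁ V₁ V₂ P₁ P₂ hV₁ hP₁ hfront F G hFu hFv hGu hGv hrep
          (Or.inl (by rw [hV₁]; simp) : a₁ + u₁ ∈ V₁ ∪ V₂)
      rw [f1, g1] at hsup hstr
      have i0 := hsup _ hb0; rw [f0, g0] at i0
      have i3 := hsup _ hb3; rw [f3, g3] at i3
      have iy := hsup _ (hyK y hy)
      exact corner10 (α := α) (β := β) (s := F (y - a₁)) (t := G (y - a₁)) hF hG (by linarith) (by linarith) (by linarith) (by linarith)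
    · -- corner at a₁ + u₁ + v₁
      obtain ⟨α, β, hsup, hstr⟩ :=
        support_pkg a₁ u₁ v₁ V₁ V₂ P₁ P₂ hV₁ hP₁ hfront F G hFu hFv hGu hGv hrep
          (Or.inl (by rw [hV₁]; simp) : a₁ + u₁ + v₁ ∈ V₁ ∪ V₂)
      rw [f3, g3] at hsup hstr
      have i1 := hsup _ hb1; rw [f1, g1] at i1
      have i2 := hsup _ hb2; rw [f2, g2] at i2
      have iy := hsup _ (hyK y hy)
      exact corner11 (α := α) (β := β) (s := F (y - a₁)) (t := G (y - a₁)) hF hG (by linarith) (by linarith) (by linarith) (by linarith)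
  -- not both coordinates in the box
  have hout : ∀ y ∈ P₂, ¬((0 ≤ F (y - a₁) ∧ F (y - a₁) ≤ 1) ∧
      (0 ≤ G (y - a₁) ∧ G (y - a₁) ≤ 1)) := by
    rintro y hy ⟨⟨hf0, hf1⟩, hg0, hg1⟩
    have hyP₁ : y ∈ P₁ := by
      rw [hP₁, hV₁]
      exact mem_hull_box hf0 hf1 hg0 hg1 (hrep' y)
    exact absurd (Set.mem_inter hyP₁ hy) (by rw [hdisj]; exact notMem_empty y)
  -- connectivity
  have hpc : IsPreconnected P₂ := by
    rw [hP₂]; exact (convex_convexHull ℝ V₂).isPreconnected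
  have hFc : Continuous fun x : E => F (x - a₁) :=
    (LinearMap.continuous_of_finiteDimensional F).comp (continuous_id.sub continuous_const)
  have hGc : Continuous fun x : E => G (x - a₁) :=
    (LinearMap.continuous_of_finiteDimensional G).comp (continuous_id.sub continuous_const)
  set A : Set E := (fun x : E => F (x - a₁)) ⁻¹' (Iio 0 ∪ Ioi 1) with hA
  set B : Set E := (fun x : E => G (x - a₁)) ⁻¹' (Iio 0 ∪ Ioi 1) with hB
  have hmemA : ∀ x : E, x ∈ A ↔ ¬(0 ≤ F (x - a₁) ∧ F (x - a₁) ≤ 1) := by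
    intro x
    simp only [hA, mem_preimage, mem_union, mem_Iio, mem_Ioi]
    constructor
    · rintro (h | h) ⟨h1, h2⟩ <;> linarith
    · intro h
      by_contra hcon
      push_neg at hcon
      exact h hcon
  have hmemB : ∀ x : E, x ∈ B ↔ ¬(0 ≤ G (x - a₁) ∧ G (x - a₁) ≤ 1) := by
    intro x
    simp only [hB, mem_preimage, mem_union, mem_Iio, mem_Ioi]
    constructor
    · rintro (h | h) ⟨h1, h2⟩ <;> linarith
    · intro h
      by_contra hcon
      push_neg at hcon
      exact h hcon
  have hchoice : (∀ y ∈ P₂, 0 ≤ F (y - a₁) ∧ F (y - a₁) ≤ 1) ∨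
      (∀ y ∈ P₂, 0 ≤ G (y - a₁) ∧ G (y - a₁) ≤ 1) := by
    by_contra hcon
    push_neg at hcon
    obtain ⟨⟨y₁, hy₁, hy₁'⟩, ⟨y₂, hy₂, hy₂'⟩⟩ := hcon
    have hne₁ : (P₂ ∩ A).Nonempty :=
      ⟨y₁, hy₁, (hmemA y₁).mpr fun hc => absurd (hy₁' hc.1) (not_lt.mpr hc.2)⟩
    have hne₂ : (P₂ ∩ B).Nonempty :=
      ⟨y₂, hy₂, (hmemB y₂).mpr fun hc => absurd (hy₂' hc.1) (not_lt.mpr hc.2)⟩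
    obtain ⟨z, hzP, hzA, hzB⟩ := hpc A B
      ((isOpen_Iio.union isOpen_Ioi).preimage hFc)
      ((isOpen_Iio.union isOpen_Ioi).preimage hGc)
      (fun y hy => by
        rcases hcorner y hy with h | h
        · exact Or.inr ((hmemB y).mpr fun hg => hout y hy ⟨h, hg⟩)
        · exact Or.inl ((hmemA y).mpr fun hf => hout y hy ⟨hf, h⟩))
      hne₁ hne₂
    rcases hcorner z hzP with h | h
    · exact (hmemA z).mp hzA h
    · exact (hmemB z).mp hzB h
  rcases hchoice with hFbox | hGbox
  · -- swap roles of u₁ and v₁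
    have e : a₁ + v₁ + u₁ = a₁ + u₁ + v₁ := by abel
    have hV₁' : V₁ = {a₁, a₁ + v₁, a₁ + u₁, a₁ + v₁ + u₁} := by
      rw [e, hV₁]
      ext x
      simp only [mem_insert_iff, mem_singleton_iff]
      tauto
    exact stmt_slab a₁ v₁ u₁ a₂ u₂ v₂ V₁ V₂ P₁ P₂ (li_swap h₁) h₂ hV₁' hV₂ hP₁ hP₂
      hfront hdisj
      (fun y hy g hg0 hg1 => by
        rw [ftrans g (y - a₁), hg0, hg1]
        simpa using hFbox y hy)
  · exact stmt_slab a₁ u₁ v₁ a₂ u₂ v₂ V₁ V₂ P₁ P₂ h₁ h₂ hV₁ hV₂ hP₁ hP₂ hfront hdisj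
      (fun y hy g hg0 hg1 => by
        rw [ftrans g (y - a₁), hg0, hg1]
        simpa using hGbox y hy)
end

section
/- Let u_h, u_v be a basis of ℤ², and let u₋₁ = a·u_h + b·u_v and u₁ = c·u_h + d·u_v be lattice vectors with a·d − b·c = 1. Let C ∈ ℤ², set C_h = C − u_h and C_v = C − u_v, and let D be the intersection point of the line through C_h with direction u₁ and the line through C_v with direction u₋₁ (assume u₁ and u₋₁ are linearly independent). Then D ∈ ℤ², and C − D = a·u₁ + d·u₋₁ = a(c+d)·u_h + d(a+b)·u_v. -/
/-!
Inverting the unimodular change of basis gives `u_h = d·u₋₁ − b·u₁` and `u_v = a·u₁ − c·u₋₁`,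
so `C_v − C_h = u_h − u_v = −(a+b)·u₁ + (c+d)·u₋₁`. Comparing coefficients in the independent
pair `u₁, u₋₁` pins the intersection parameter on the first line to `−(a+b)`, whence
`D = C − u_h − (a+b)·u₁ = C − a·u₁ − d·u₋₁`, an integral combination of lattice vectors.
-/

open Set

section UnimodularLines

variable {R M : Type*} [CommRing R] [AddCommGroup M] [Module R M]

theorem eq_smul_sub_smul_of_unimodular {x y u v : M} {a b c d : R} (hdet : a * d - b * c = 1)
    (hu : u = a • x + b • y) (hv : v = c • x + d • y) :
    x = d • u - b • v ∧ y = a • v - c • u := by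
  subst hu hv
  constructor
  · linear_combination (norm := module) (-hdet) • x
  · linear_combination (norm := module) (-hdet) • y

theorem eq_sub_smul_sub_smul_of_mem_lines {P x y u v D : M} {a b c d t s : R}
    (hdet : a * d - b * c = 1) (hu : u = a • x + b • y) (hv : v = c • x + d • y)
    (hind : LinearIndependent R ![v, u])
    (ht : D = P - x + t • v) (hs : D = P - y + s • u) :
    D = P - a • v - d • u := by
  obtain ⟨hx, hy⟩ := eq_smul_sub_smul_of_unimodular hdet hu hv
  have hcoeff : t • v + (-s) • u = (-(a + b)) • v + (c + d) • u := by
    rw [ht, hx, hy] at hs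
    linear_combination (norm := module) hs
  rw [ht, (hind.eq_of_pair hcoeff).1, hx]
  module

end UnimodularLines

@[simp]
theorem ι2_add (z w : Fin 2 → ℤ) : ι2 (z + w) = ι2 z + ι2 w := by
  funext i; simp [ι2]

@[simp]
theorem ι2_sub (z w : Fin 2 → ℤ) : ι2 (z - w) = ι2 z - ι2 w := by
  funext i; simp [ι2]

@[simp]
theorem ι2_zsmul (n : ℤ) (z : Fin 2 → ℤ) : ι2 (n • z) = (n : ℝ) • ι2 z := by
  funext i; simp [ι2]

theorem stmt_10_general (uh uv : Fin 2 → ℤ)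
    (a b c d : ℤ) (hdet : a * d - b * c = 1)
    (um u1 : Fin 2 → ℤ) (hum : um = a • uh + b • uv) (hu1 : u1 = c • uh + d • uv)
    (C : Fin 2 → ℤ) (D : Fin 2 → ℝ)
    (hind : LinearIndependent ℝ ![ι2 u1, ι2 um])
    (hD1 : ∃ t : ℝ, D = ι2 (C - uh) + t • ι2 u1)
    (hD2 : ∃ s : ℝ, D = ι2 (C - uv) + s • ι2 um) :
    (∃ Dz : Fin 2 → ℤ, D = ι2 Dz) ∧
    ι2 C - D = (a : ℝ) • ι2 u1 + (d : ℝ) • ι2 um ∧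
    ι2 C - D = ((a * (c + d) : ℤ) : ℝ) • ι2 uh + ((d * (a + b) : ℤ) : ℝ) • ι2 uv := by
  obtain ⟨t, ht⟩ := hD1
  obtain ⟨s, hs⟩ := hD2
  have hdetℝ : (a : ℝ) * d - b * c = 1 := by exact_mod_cast hdet
  have hD : D = ι2 C - (a : ℝ) • ι2 u1 - (d : ℝ) • ι2 um :=
    eq_sub_smul_sub_smul_of_mem_lines hdetℝ
      (by rw [hum, ι2_add, ι2_zsmul, ι2_zsmul]) (by rw [hu1, ι2_add, ι2_zsmul, ι2_zsmul]) hind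
      (by rwa [ι2_sub] at ht) (by rwa [ι2_sub] at hs)
  refine ⟨⟨C - a • u1 - d • um, by rw [hD, ι2_sub, ι2_sub, ι2_zsmul, ι2_zsmul]⟩,
    by rw [hD]; abel, ?_⟩
  rw [hD, hum, hu1]
  simp only [ι2_add, ι2_zsmul, Int.cast_mul, Int.cast_add]
  module

/-- Let `u_h, u_v` be a basis of `ℤ²`, `u₋₁ = a·u_h + b·u_v`, `u₁ = c·u_h + d·u_v` with
`ad − bc = 1`. With `C_h = C − u_h`, `C_v = C − u_v`, let `D` be the intersection of the
line through `C_h` with direction `u₁` and the line through `C_v` with direction `u₋₁`.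
Then `D` is a lattice point and `C − D = a·u₁ + d·u₋₁ = a(c+d)·u_h + d(a+b)·u_v`. -/
theorem stmt_10 (uh uv : Fin 2 → ℤ)
    (hbasis : uh 0 * uv 1 - uh 1 * uv 0 = 1 ∨ uh 0 * uv 1 - uh 1 * uv 0 = -1)
    (a b c d : ℤ) (hdet : a * d - b * c = 1)
    (um u1 : Fin 2 → ℤ) (hum : um = a • uh + b • uv) (hu1 : u1 = c • uh + d • uv)
    (C : Fin 2 → ℤ) (D : Fin 2 → ℝ)
    (hind : LinearIndependent ℝ ![ι2 u1, ι2 um])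
    (hD1 : ∃ t : ℝ, D = ι2 (C - uh) + t • ι2 u1)
    (hD2 : ∃ s : ℝ, D = ι2 (C - uv) + s • ι2 um) :
    (∃ Dz : Fin 2 → ℤ, D = ι2 Dz) ∧
    ι2 C - D = (a : ℝ) • ι2 u1 + (d : ℝ) • ι2 um ∧
    ι2 C - D = ((a * (c + d) : ℤ) : ℝ) • ι2 uh + ((d * (a + b) : ℤ) : ℝ) • ι2 uv :=
  stmt_10_general uh uv a b c d hdet um u1 hum hu1 C D hind hD1 hD2
end

section
/- Let P ⊆ ℝ² be a compact convex set, u a nonzero vector with max_{x∈P} ℒ_u(x) ≥ ‖u‖, where ℒ_u(x) is the length of P ∩ ℓ_u(x) (chord through x in direction u). Let x, y be the two contact points of P with respect to u (allowing x = y). Then P ∩ (u + P) is contained in the closed strip bounded by the lines ℓ_u(x) and ℓ_u(y). -/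
open Set Pointwise

/-- Let `K ⊆ ℝ²` be compact convex, `u ≠ 0` with some chord of `K` in direction `u` of
length at least `‖u‖`, and let `x, y` be the two contact points of `K` with respect to `u`
(`φ` is a nonzero linear functional vanishing on `u`, serving as projection along `u`;
`[c,d]` is the interval of `φ`-values where the chord length is `≥ ‖u‖`). Then
`K ∩ (u + K)` is contained in the closed strip bounded by the lines through `x` and
`y` with direction `u`. -/
theorem stmt_12 (K : Set (EuclideanSpace ℝ (Fin 2))) (hK : IsCompact K) (hconv : Convex ℝ K)
    (u : EuclideanSpace ℝ (Fin 2)) (hu : u ≠ 0)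
    (L : EuclideanSpace ℝ (Fin 2) → ℝ)
    (hL : ∀ x, L x = Metric.diam (K ∩ {y | ∃ t : ℝ, y = x + t • u}))
    (hmax : ∃ x ∈ K, ‖u‖ ≤ L x)
    (φ : EuclideanSpace ℝ (Fin 2) →ₗ[ℝ] ℝ) (hφu : φ u = 0) (hφ : φ ≠ 0)
    (c d : ℝ)
    (hc : c = sInf (φ '' {z ∈ K | ‖u‖ ≤ L z}))
    (hd : d = sSup (φ '' {z ∈ K | ‖u‖ ≤ L z}))
    (x y : EuclideanSpace ℝ (Fin 2))
    (hx : x ∈ frontier K ∩ frontier (u +ᵥ K) ∧ φ x = c ∧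
      ∀ ε : ℝ, 0 < ε → x - ε • u ∉ (u +ᵥ K))
    (hy : y ∈ frontier K ∩ frontier (u +ᵥ K) ∧ φ y = d ∧
      ∀ ε : ℝ, 0 < ε → y - ε • u ∉ (u +ᵥ K)) :
    K ∩ (u +ᵥ K) ⊆ {z | min (φ x) (φ y) ≤ φ z ∧ φ z ≤ max (φ x) (φ y)} := by
  rintro z ⟨hzK, hzU⟩
  obtain ⟨k, hk, rfl⟩ := hzU
  have hzk : (u +ᵥ k) - u = k := by simp [vadd_eq_add]
  -- the chord through z := u + k has length ≥ ‖u‖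
  have hzS : (u +ᵥ k) ∈ {z ∈ K | ‖u‖ ≤ L z} := by
    refine ⟨hzK, ?_⟩
    rw [hL]
    have h1 : (u +ᵥ k) ∈ K ∩ {y | ∃ t : ℝ, y = (u +ᵥ k) + t • u} :=
      ⟨hzK, 0, by simp⟩
    have h2 : (u +ᵥ k) - u ∈ K ∩ {y | ∃ t : ℝ, y = (u +ᵥ k) + t • u} := by
      refine ⟨by rw [hzk]; exact hk, -1, ?_⟩
      simp [sub_eq_add_neg]
    have hb : Bornology.IsBounded (K ∩ {y | ∃ t : ℝ, y = (u +ᵥ k) + t • u}) :=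
      hK.isBounded.subset inter_subset_left
    have := Metric.dist_le_diam_of_mem hb h1 h2
    simpa [dist_eq_norm] using this
  have hφcont : Continuous φ := φ.continuous_of_finiteDimensional
  have hScpt : IsCompact (φ '' K) := hK.image hφcont
  have hsub : φ '' {z ∈ K | ‖u‖ ≤ L z} ⊆ φ '' K :=
    image_mono (fun w hw => hw.1)
  have hmem : φ (u +ᵥ k) ∈ φ '' {z ∈ K | ‖u‖ ≤ L z} := mem_image_of_mem _ hzS
  have hbdd_below : BddBelow (φ '' {z ∈ K | ‖u‖ ≤ L z}) :=
    (hScpt.bddBelow.mono hsub)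
  have hbdd_above : BddAbove (φ '' {z ∈ K | ‖u‖ ≤ L z}) :=
    (hScpt.bddAbove.mono hsub)
  have h₁ : c ≤ φ (u +ᵥ k) := hc ▸ csInf_le hbdd_below hmem
  have h₂ : φ (u +ᵥ k) ≤ d := hd ▸ le_csSup hbdd_above hmem
  rw [hx.2.1, hy.2.1]
  exact ⟨le_trans (min_le_left _ _) h₁, le_trans h₂ (le_max_right _ _)⟩
end

section
/- Let σ^∨ ⊆ ℝ^d be a full-dimensional pointed polyhedral cone with apex 0, and for each facet-direction τ of σ^∨ let u_τ ∈ σ^∨ be a nonzero vector along the corresponding extreme ray, with translation amounts N(τ) ≥ 0. Then the complement σ^∨ \ ⋃_τ (σ^∨ + N(τ)·u_τ) is bounded, i.e., contained in a bounded neighborhood of the apex. -/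
open Set Pointwise

section FiniteCone

variable {ι E : Type*} [Fintype ι]

def finiteCone [AddCommGroup E] [Module ℝ E] (u : ι → E) : Set E :=
  {x | ∃ t : ι → ℝ, (∀ τ, 0 ≤ t τ) ∧ x = ∑ τ, t τ • u τ}

theorem sum_smul_mem_vadd_finiteCone [AddCommGroup E] [Module ℝ E] [DecidableEq ι]
    (u : ι → E) {t : ι → ℝ} (ht : ∀ τ, 0 ≤ t τ) {τ₀ : ι} {c : ℝ} (hc : c ≤ t τ₀) :
    ∑ τ, t τ • u τ ∈ (c • u τ₀) +ᵥ finiteCone u := by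
  refine ⟨∑ τ, (t - Pi.single τ₀ c : ι → ℝ) τ • u τ, ⟨t - Pi.single τ₀ c, fun τ => ?_, rfl⟩, ?_⟩
  · rcases eq_or_ne τ τ₀ with rfl | hne
    · simpa using hc
    · simpa [Pi.single_apply, hne] using ht τ
  · simp only [Pi.sub_apply, sub_smul, Finset.sum_sub_distrib, vadd_eq_add]
    simp [Pi.single_apply, ite_smul]

theorem norm_sum_smul_le_of_le [SeminormedAddCommGroup E] [NormedSpace ℝ E] (u : ι → E)
    {t N : ι → ℝ} (ht : ∀ τ, 0 ≤ t τ) (htN : ∀ τ, t τ ≤ N τ) :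
    ‖∑ τ, t τ • u τ‖ ≤ ∑ τ, N τ * ‖u τ‖ :=
  calc ‖∑ τ, t τ • u τ‖ ≤ ∑ τ, ‖t τ • u τ‖ := norm_sum_le _ _
    _ = ∑ τ, t τ * ‖u τ‖ := by simp only [norm_smul, Real.norm_of_nonneg (ht _)]
    _ ≤ ∑ τ, N τ * ‖u τ‖ :=
      Finset.sum_le_sum fun τ _ => mul_le_mul_of_nonneg_right (htN τ) (norm_nonneg _)

/-- A point outside every translate `N τ • u τ +ᵥ finiteCone u` has all coefficients below
`N`, so it lies in the ball of radius `∑ τ, N τ * ‖u τ‖`. -/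
theorem isBounded_finiteCone_diff_iUnion_vadd [SeminormedAddCommGroup E] [NormedSpace ℝ E]
    (u : ι → E) (N : ι → ℝ) :
    Bornology.IsBounded (finiteCone u \ ⋃ τ, (N τ • u τ) +ᵥ finiteCone u) := by
  classical
  refine (Metric.isBounded_closedBall (x := (0 : E)) (r := ∑ τ, N τ * ‖u τ‖)).subset ?_
  rintro _ ⟨⟨t, ht, rfl⟩, hx⟩
  have htN : ∀ τ, t τ ≤ N τ := fun τ => le_of_lt <| not_le.1 fun hNt =>
    hx <| mem_iUnion.2 ⟨τ, sum_smul_mem_vadd_finiteCone u ht hNt⟩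
  simpa using norm_sum_smul_le_of_le u ht htN

end FiniteCone

theorem stmt_17_general (d m : ℕ) (u : Fin m → (Fin d → ℝ))
    (C : Set (Fin d → ℝ))
    (hC : C = {x | ∃ t : Fin m → ℝ, (∀ τ, 0 ≤ t τ) ∧ x = ∑ τ, t τ • u τ})
    (N : Fin m → ℝ) :
    Bornology.IsBounded (C \ ⋃ τ, (N τ • u τ) +ᵥ C) :=
  hC ▸ isBounded_finiteCone_diff_iUnion_vadd u N

/-- Let `C = σ^∨ ⊆ ℝ^d` be a full-dimensional pointed polyhedral cone with apex `0`,
generated by vectors `u_τ` each spanning an extreme ray, and let `N(τ) ≥ 0` be translation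
amounts. Then the complement `C \ ⋃_τ (C + N(τ)·u_τ)` is bounded. -/
theorem stmt_17 (d m : ℕ) (u : Fin m → (Fin d → ℝ)) (hu : ∀ τ, u τ ≠ 0)
    (C : Set (Fin d → ℝ))
    (hC : C = {x | ∃ t : Fin m → ℝ, (∀ τ, 0 ≤ t τ) ∧ x = ∑ τ, t τ • u τ})
    (hray : ∀ τ, IsExtreme ℝ C {x | ∃ t : ℝ, 0 ≤ t ∧ x = t • u τ})
    (hpointed : ∀ x ∈ C, -x ∈ C → x = 0)
    (hfull : Submodule.span ℝ C = ⊤)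
    (N : Fin m → ℝ) (hN : ∀ τ, 0 ≤ N τ) :
    Bornology.IsBounded (C \ ⋃ τ, (N τ • u τ) +ᵥ C) :=
  stmt_17_general d m u C hC N
end
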